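/- arXiv:2403.12183 — 5 statements merged into one kernel-verified Lean document; each statement's English description precedes it below -/
import Mathlib

section
/- Let a matching market of size n (all pairs mutually acceptable) have a unique stable matching μ, and suppose there exist η ∈ (0,1), a firm f̄, and a worker w̄ such that every worker w ≠ w̄ is strictly preferred by at least ηn firms f to their partners μ(f), and every firm f ≠ f̄ is strictly preferred by at least ηn workers w to their partners μ(w). Let ζ ∈ (0, η) and let λ be a matching with S(λ) ≥ (1−ζ)n under which some agent a ∉ {f̄, w̄} is unmatched. Then λ has at least (η−ζ)n blocking pairs whose satisfaction yields a matching λ' with S(λ') = S(λ) − 1, and at least (η−ζ)n − 1 blocking pairs whose satisfaction yields a matching λ' with S(λ') = S(λ) − 1 under which some agent outside {f̄, w̄} is unmatched. -/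
/-- A matching market of size `n`: firms and workers are both indexed by `Fin n`.
`fpref f w` is the rank firm `f` assigns to worker `w` (smaller = more preferred);
injectivity makes each preference a strict total order.  All pairs are mutually
acceptable: being unmatched is implicitly worse than being matched to anybody. -/
structure Market (n : ℕ) where
  fpref : Fin n → Fin n → ℕ
  wpref : Fin n → Fin n → ℕ
  fpref_inj : ∀ f, Function.Injective (fpref f)
  wpref_inj : ∀ w, Function.Injective (wpref w)

/-- A (possibly partial) one-to-one matching between firms and workers.
`mf f = none` means firm `f` is unmatched, similarly for `mw`. -/
structure Matching (n : ℕ) where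
  mf : Fin n → Option (Fin n)
  mw : Fin n → Option (Fin n)
  consistent : ∀ f w, mf f = some w ↔ mw w = some f

variable {n : ℕ}

/-- Firm `f` strictly prefers worker `w` to the (optional) partner `o`.
An unmatched firm prefers any worker (mutual acceptability). -/
def FPrefOver (M : Market n) (f w : Fin n) (o : Option (Fin n)) : Prop :=
  ∀ w' ∈ o, M.fpref f w < M.fpref f w'

/-- Worker `w` strictly prefers firm `f` to the (optional) partner `o`. -/
def WPrefOver (M : Market n) (w f : Fin n) (o : Option (Fin n)) : Prop :=
  ∀ f' ∈ o, M.wpref w f < M.wpref w f'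

/-- `(f, w)` is a blocking pair of `μ`. -/
def Blocking (M : Market n) (μ : Matching n) (f w : Fin n) : Prop :=
  μ.mf f ≠ some w ∧ FPrefOver M f w (μ.mf f) ∧ WPrefOver M w f (μ.mw w)

/-- A matching is stable if it admits no blocking pair. -/
def Stable (M : Market n) (μ : Matching n) : Prop :=
  ∀ f w, ¬ Blocking M μ f w

/-- `μ'` is obtained from `μ` by satisfying the blocking pair `(f, w)`:
`f` and `w` are matched to each other, their former partners (if any) become
unmatched, and everyone else keeps the same partner. -/
def Satisfies (M : Market n) (μ μ' : Matching n) (f w : Fin n) : Prop :=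
  Blocking M μ f w ∧ μ'.mf f = some w ∧
  (∀ w', μ.mf f = some w' → μ'.mw w' = none) ∧
  (∀ f', μ.mw w = some f' → μ'.mf f' = none) ∧
  (∀ f', f' ≠ f → μ.mw w ≠ some f' → μ'.mf f' = μ.mf f') ∧
  (∀ w', w' ≠ w → μ.mf f ≠ some w' → μ'.mw w' = μ.mw w')

/-- One step of the blocking-pair dynamics. -/
def StepRel (M : Market n) (μ μ' : Matching n) : Prop :=
  ∃ f w, Satisfies M μ μ' f w

/-- `Sc μ lam` is the number of firms matched under `lam` to their partners under
the (unique) stable matching `μ`. -/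
noncomputable def Sc (μ lam : Matching n) : ℕ :=
  Nat.card {f : Fin n // lam.mf f = μ.mf f}

/-- Some agent other than `fbar` and `wbar` is unmatched under `lam`. -/
def UnmatchedOutside (lam : Matching n) (fbar wbar : Fin n) : Prop :=
  (∃ f, f ≠ fbar ∧ lam.mf f = none) ∨ (∃ w, w ≠ wbar ∧ lam.mw w = none)
namespace Stmt15Aux
variable {n : ℕ}

/-- The matching obtained from `lam` by satisfying the pair `(f, w)`. -/
def satisfyM (lam : Matching n) (f w : Fin n) : Matching n where
  mf := fun f' => if f' = f then some w else if lam.mw w = some f' then none else lam.mf f'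
  mw := fun w' => if w' = w then some f else if lam.mf f = some w' then none else lam.mw w'
  consistent := by
    intro f' w'
    rcases eq_or_ne f' f with rfl | hf <;> rcases eq_or_ne w' w with rfl | hw
    · simp
    · simp only [if_pos rfl, if_neg hw]
      by_cases hm : lam.mf f' = some w'
      · simp only [if_pos hm]
        constructor
        · intro h; exact absurd (Option.some_injective _ h).symm hw
        · intro h; exact absurd h (by simp)
      · simp only [if_neg hm]
        constructor
        · intro h; exact absurd (Option.some_injective _ h).symm hw
        · intro h; exact absurd ((lam.consistent f' w').mpr h) hm
    · simp only [if_neg hf, if_pos rfl]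
      by_cases hm : lam.mw w' = some f'
      · simp only [if_pos hm]
        constructor
        · intro h; exact absurd h (by simp)
        · intro h; exact absurd (Option.some_injective _ h).symm hf
      · simp only [if_neg hm]
        constructor
        · intro h; exact absurd ((lam.consistent f' w').mp h) hm
        · intro h; exact absurd (Option.some_injective _ h).symm hf
    · simp only [if_neg hf, if_neg hw]
      by_cases hm1 : lam.mw w = some f' <;> by_cases hm2 : lam.mf f = some w'
      · simp [if_pos hm1, if_pos hm2]
      · simp only [if_pos hm1, if_neg hm2]
        constructor
        · intro h; exact absurd h (by simp)
        · intro h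
          have h1 : lam.mf f' = some w := (lam.consistent f' w).mpr hm1
          have h2 : lam.mf f' = some w' := (lam.consistent f' w').mpr h
          exact absurd (Option.some_injective _ (h1.symm.trans h2)).symm hw
      · simp only [if_neg hm1, if_pos hm2]
        constructor
        · intro h
          have h1 : lam.mw w' = some f' := (lam.consistent f' w').mp h
          have h2 : lam.mw w' = some f := (lam.consistent f w').mp hm2
          exact absurd (Option.some_injective _ (h1.symm.trans h2)) hf
        · intro h; exact absurd h (by simp)
      · simp only [if_neg hm1, if_neg hm2]
        exact lam.consistent f' w'

lemma satisfyM_mf_self (lam : Matching n) (f w : Fin n) :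
    (satisfyM lam f w).mf f = some w := by simp [satisfyM]

lemma satisfies_satisfyM (M : Market n) (lam : Matching n) {f w : Fin n}
    (hb : Blocking M lam f w) : Satisfies M lam (satisfyM lam f w) f w := by
  refine ⟨hb, satisfyM_mf_self lam f w, ?_, ?_, ?_, ?_⟩
  · intro w' h
    have hw : w' ≠ w := fun e => hb.1 (e ▸ h)
    simp [satisfyM, if_neg hw, h]
  · intro f' h
    have hf : f' ≠ f := by
      intro e; rw [e] at h
      exact hb.1 ((lam.consistent f w).mpr h)
    simp [satisfyM, if_neg hf, h]
  · intro f' hf h; simp [satisfyM, if_neg hf, if_neg h]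
  · intro w' hw h; simp [satisfyM, if_neg hw, if_neg h]

end Stmt15Aux
namespace Stmt15Aux
variable {n : ℕ}

lemma perfect_mf (M : Market n) {μ : Matching n} (hst : Stable M μ) (f : Fin n) :
    ∃ w, μ.mf f = some w := by
  by_contra h
  push_neg at h
  have hf : μ.mf f = none := by
    cases hmf : μ.mf f with
    | none => rfl
    | some w => exact absurd hmf (h w)
  have hw : ∃ w, μ.mw w = none := by
    by_contra hw
    push_neg at hw
    choose g hg using fun w => Option.ne_none_iff_exists'.mp (hw w)
    have hginj : Function.Injective g := by
      intro w1 w2 he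
      have h1 := (μ.consistent (g w1) w1).mpr (hg w1)
      have h2 := (μ.consistent (g w2) w2).mpr (hg w2)
      rw [he] at h1
      exact Option.some_injective _ (h1.symm.trans h2)
    obtain ⟨w, hwf⟩ := Finite.injective_iff_surjective.mp hginj f
    exact h w ((μ.consistent f w).mpr (hwf ▸ hg w))
  obtain ⟨w, hwn⟩ := hw
  refine hst f w ⟨by simp [hf], ?_, ?_⟩
  · intro w' hw'; rw [hf] at hw'; simp at hw'
  · intro f' hf'; rw [hwn] at hf'; simp at hf'

lemma perfect_mw (M : Market n) {μ : Matching n} (hst : Stable M μ) (w : Fin n) :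
    ∃ f, μ.mw w = some f := by
  by_contra h
  push_neg at h
  have hwn : μ.mw w = none := by
    cases hmw : μ.mw w with
    | none => rfl
    | some f => exact absurd hmw (h f)
  have hf : ∃ f, μ.mf f = none := by
    by_contra hf
    push_neg at hf
    choose g hg using fun f => Option.ne_none_iff_exists'.mp (hf f)
    have hginj : Function.Injective g := by
      intro f1 f2 he
      have h1 := (μ.consistent f1 (g f1)).mp (hg f1)
      have h2 := (μ.consistent f2 (g f2)).mp (hg f2)
      rw [he] at h1
      exact Option.some_injective _ (h1.symm.trans h2)
    obtain ⟨f, hwf⟩ := Finite.injective_iff_surjective.mp hginj w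
    exact h f ((μ.consistent f w).mp (hwf ▸ hg f))
  obtain ⟨f, hfn⟩ := hf
  refine hst f w ⟨by simp [hfn], ?_, ?_⟩
  · intro w' hw'; rw [hfn] at hw'; simp at hw'
  · intro f' hf'; rw [hwn] at hf'; simp at hf'

open Finset in
lemma Sc_eq_filter (μ lam : Matching n) :
    Sc μ lam = (Finset.univ.filter (fun f => lam.mf f = μ.mf f)).card := by
  rw [Sc, Nat.card_eq_fintype_card, Fintype.card_subtype]

lemma Sc_succ {μ lam lam' : Matching n} (g : Fin n)
    (hg : lam.mf g = μ.mf g) (hg' : lam'.mf g ≠ μ.mf g)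
    (hoth : ∀ f, f ≠ g → (lam'.mf f = μ.mf f ↔ lam.mf f = μ.mf f)) :
    Sc μ lam' + 1 = Sc μ lam := by
  classical
  rw [Sc_eq_filter, Sc_eq_filter]
  have he : Finset.univ.filter (fun f => lam'.mf f = μ.mf f)
      = (Finset.univ.filter (fun f => lam.mf f = μ.mf f)).erase g := by
    ext f
    simp only [Finset.mem_filter, Finset.mem_erase, Finset.mem_univ, true_and]
    constructor
    · intro h
      have hne : f ≠ g := fun e => hg' (e ▸ h)
      exact ⟨hne, (hoth f hne).mp h⟩
    · rintro ⟨hne, h⟩; exact (hoth f hne).mpr h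
  have hmem : g ∈ Finset.univ.filter (fun f => lam.mf f = μ.mf f) := by simp [hg]
  rw [he, Finset.card_erase_of_mem hmem]
  have : 0 < (Finset.univ.filter (fun f => lam.mf f = μ.mf f)).card :=
    Finset.card_pos.mpr ⟨g, hmem⟩
  omega

lemma card_le_nat_card {α : Type*} [Fintype α] [DecidableEq α] {Q : α → Prop}
    (s : Finset (Fin n)) (g : Fin n → α)
    (hinj : Set.InjOn g s) (hQ : ∀ f ∈ s, Q (g f)) : s.card ≤ Nat.card {p // Q p} := by
  classical
  rw [Nat.card_eq_fintype_card, Fintype.card_subtype]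
  exact Finset.card_le_card_of_injOn g
    (fun f hf => Finset.mem_filter.mpr ⟨Finset.mem_univ _, hQ f hf⟩) hinj

end Stmt15Aux
open Stmt15Aux

/-- **Counting destabilizing blocking pairs**: in a market with a unique stable
matching `μ` satisfying the `η`-conditions (with exceptional agents `fbar`,
`wbar`), any matching `lam` with `S(lam) ≥ (1-ζ)n` under which some agent outside
`{fbar, wbar}` is unmatched has at least `(η-ζ)n` blocking pairs whose
satisfaction decreases `S` by one, of which all but at most one yield a matching
under which some agent outside `{fbar, wbar}` is unmatched. -/
theorem stmt15 (M : Market n) (μ : Matching n) (hst : Stable M μ)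
    (huniq : ∀ μ'' : Matching n, Stable M μ'' → μ'' = μ)
    (η : ℝ) (hη : η ∈ Set.Ioo (0 : ℝ) 1) (fbar wbar : Fin n)
    (h1 : ∀ w : Fin n, w ≠ wbar →
      η * n ≤ (Nat.card {f : Fin n // FPrefOver M f w (μ.mf f)} : ℝ))
    (h2 : ∀ f : Fin n, f ≠ fbar →
      η * n ≤ (Nat.card {w : Fin n // WPrefOver M w f (μ.mw w)} : ℝ))
    (ζ : ℝ) (hζ : ζ ∈ Set.Ioo (0 : ℝ) η)
    (lam : Matching n) (hS : (1 - ζ) * n ≤ (Sc μ lam : ℝ))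
    (hun : UnmatchedOutside lam fbar wbar) :
    (η - ζ) * n ≤
      (Nat.card {p : Fin n × Fin n //
        ∃ lam', Satisfies M lam lam' p.1 p.2 ∧ Sc μ lam' + 1 = Sc μ lam} : ℝ) ∧
    (η - ζ) * n - 1 ≤
      (Nat.card {p : Fin n × Fin n //
        ∃ lam', Satisfies M lam lam' p.1 p.2 ∧ Sc μ lam' + 1 = Sc μ lam ∧
          UnmatchedOutside lam' fbar wbar} : ℝ) := by
  classical
  rcases hun with ⟨f₀, hf₀ne, hf₀⟩ | ⟨w₀, hw₀ne, hw₀⟩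
  · -- firm f₀ ≠ fbar unmatched under lam
    set A := Finset.univ.filter (fun w => WPrefOver M w f₀ (μ.mw w)) with hA_def
    set B := Finset.univ.filter (fun w : Fin n => lam.mw w = μ.mw w) with hB_def
    have hA : η * n ≤ (A.card : ℝ) := by
      have := h2 f₀ hf₀ne
      rwa [Nat.card_eq_fintype_card, Fintype.card_subtype] at this
    have hB : (1 - ζ) * n ≤ (B.card : ℝ) := by
      refine le_trans hS ?_
      rw [Sc_eq_filter]
      have hle : (Finset.univ.filter (fun f => lam.mf f = μ.mf f)).card ≤ B.card := by
        choose pμ hpμ using perfect_mf M hst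
        refine Finset.card_le_card_of_injOn pμ ?_ ?_
        · intro f hf
          rw [Finset.mem_coe, Finset.mem_filter] at hf
          have hfa : lam.mf f = some (pμ f) := hf.2.trans (hpμ f)
          rw [hB_def, Finset.mem_coe, Finset.mem_filter]
          exact ⟨Finset.mem_univ _,
            ((lam.consistent f (pμ f)).mp hfa).trans ((μ.consistent f (pμ f)).mp (hpμ f)).symm⟩
        · intro f1 _ f2 _ he
          have h1' := (μ.consistent f1 (pμ f1)).mp (hpμ f1)
          have h2' := (μ.consistent f2 (pμ f2)).mp (hpμ f2)
          rw [he] at h1'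
          exact Option.some_injective _ (h1'.symm.trans h2')
      exact_mod_cast hle
    have hUn : ((A ∪ B).card : ℝ) ≤ n := by
      have := Finset.card_le_univ (A ∪ B)
      simp only [Finset.card_univ, Fintype.card_fin] at this
      exact_mod_cast this
    have hsum : ((A ∪ B).card : ℝ) + (A ∩ B).card = A.card + B.card := by
      exact_mod_cast Finset.card_union_add_card_inter A B
    have hABcard : (η - ζ) * n ≤ ((A ∩ B).card : ℝ) := by linarith
    have key : ∀ w ∈ A ∩ B, ∃ f', μ.mw w = some f' ∧ f' ≠ f₀ ∧
        Satisfies M lam (satisfyM lam f₀ w) f₀ w ∧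
        Sc μ (satisfyM lam f₀ w) + 1 = Sc μ lam ∧
        (satisfyM lam f₀ w).mf f' = none := by
      intro w hw
      rw [Finset.mem_inter, hA_def, hB_def, Finset.mem_filter, Finset.mem_filter] at hw
      obtain ⟨⟨-, hwp⟩, -, hwa⟩ := hw
      obtain ⟨f', hf'⟩ := perfect_mw M hst w
      have hlamw : lam.mw w = some f' := hwa.trans hf'
      have hlamf' : lam.mf f' = some w := (lam.consistent f' w).mpr hlamw
      have hmuf' : μ.mf f' = some w := (μ.consistent f' w).mpr hf'
      have hne' : f' ≠ f₀ := by
        intro e; rw [e, hf₀] at hlamf'; cases hlamf'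
      have hblock : Blocking M lam f₀ w := by
        refine ⟨by rw [hf₀]; exact fun h => (by cases h), ?_, ?_⟩
        · intro w' hw'; rw [hf₀] at hw'; simp at hw'
        · rw [hwa]; exact hwp
      have hsat := satisfies_satisfyM M lam hblock
      have hf'un : (satisfyM lam f₀ w).mf f' = none := by
        simp [satisfyM, if_neg hne', hlamw]
      have hSc : Sc μ (satisfyM lam f₀ w) + 1 = Sc μ lam := by
        refine Sc_succ f' (hlamf'.trans hmuf'.symm) ?_ ?_
        · rw [hf'un, hmuf']; exact fun h => by cases h
        · intro f'' hne''
          by_cases hne₀ : f'' = f₀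
          · have hL : (satisfyM lam f₀ w).mf f'' = some w := by
              rw [hne₀]; exact satisfyM_mf_self lam f₀ w
            constructor
            · intro h
              exfalso
              have hmu : μ.mf f'' = some w := by rw [← h, hL]
              have : μ.mw w = some f'' := (μ.consistent f'' w).mp hmu
              rw [hf'] at this
              exact hne'' (Option.some_injective _ this).symm
            · intro h
              exfalso
              rw [hne₀, hf₀] at h
              obtain ⟨w'', hw''⟩ := perfect_mf M hst f₀
              rw [hw''] at h
              cases h
          · have : (satisfyM lam f₀ w).mf f'' = lam.mf f'' := by
              have hnw : lam.mw w ≠ some f'' := by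
                rw [hlamw]; intro h
                exact hne'' (Option.some_injective _ h).symm
              simp [satisfyM, if_neg hne₀, if_neg hnw]
            rw [this]
      exact ⟨f', hf', hne', hsat, hSc, hf'un⟩
    constructor
    · refine le_trans hABcard ?_
      have := card_le_nat_card (Q := fun p : Fin n × Fin n =>
          ∃ lam', Satisfies M lam lam' p.1 p.2 ∧ Sc μ lam' + 1 = Sc μ lam)
        (A ∩ B) (fun w => (f₀, w))
        (fun a _ b _ h => (Prod.ext_iff.mp h).2)
        (fun w hw => by
          obtain ⟨f', _, _, hsat, hSc, _⟩ := key w hw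
          exact ⟨satisfyM lam f₀ w, hsat, hSc⟩)
      exact_mod_cast this
    · set C := (A ∩ B).filter (fun w => ¬ μ.mw w = some fbar) with hC_def
      have hCcard : (A ∩ B).card ≤ C.card + 1 := by
        have hsplit : ((A ∩ B).filter (fun w => μ.mw w = some fbar)).card + C.card
            = (A ∩ B).card := by
          rw [hC_def]
          simpa using Finset.card_filter_add_card_filter_not
            (s := A ∩ B) (p := fun w => μ.mw w = some fbar)
        have hD : ((A ∩ B).filter (fun w => μ.mw w = some fbar)).card ≤ 1 := by
          refine Finset.card_le_one.mpr ?_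
          intro a ha b hb
          rw [Finset.mem_filter] at ha hb
          have h1' := (μ.consistent fbar a).mpr ha.2
          have h2' := (μ.consistent fbar b).mpr hb.2
          exact Option.some_injective _ (h1'.symm.trans h2')
        omega
      have hCreal : (η - ζ) * n - 1 ≤ (C.card : ℝ) := by
        have : ((A ∩ B).card : ℝ) ≤ (C.card : ℝ) + 1 := by exact_mod_cast hCcard
        linarith
      refine le_trans hCreal ?_
      have := card_le_nat_card (Q := fun p : Fin n × Fin n =>
          ∃ lam', Satisfies M lam lam' p.1 p.2 ∧ Sc μ lam' + 1 = Sc μ lam ∧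
            UnmatchedOutside lam' fbar wbar)
        C (fun w => (f₀, w))
        (fun a _ b _ h => (Prod.ext_iff.mp h).2)
        (fun w hw => by
          rw [hC_def, Finset.mem_filter] at hw
          obtain ⟨hw, hwbar⟩ := hw
          obtain ⟨f', hf', hne', hsat, hSc, hf'un⟩ := key w hw
          have hfb : f' ≠ fbar := fun e => hwbar (e ▸ hf')
          exact ⟨satisfyM lam f₀ w, hsat, hSc, Or.inl ⟨f', hfb, hf'un⟩⟩)
      exact_mod_cast this
  · -- worker w₀ ≠ wbar unmatched under lam
    set A := Finset.univ.filter (fun f => FPrefOver M f w₀ (μ.mf f)) with hA_def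
    set B := Finset.univ.filter (fun f : Fin n => lam.mf f = μ.mf f) with hB_def
    have hA : η * n ≤ (A.card : ℝ) := by
      have := h1 w₀ hw₀ne
      rwa [Nat.card_eq_fintype_card, Fintype.card_subtype] at this
    have hB : (1 - ζ) * n ≤ (B.card : ℝ) := by
      rw [Sc_eq_filter] at hS
      exact_mod_cast hS
    have hUn : ((A ∪ B).card : ℝ) ≤ n := by
      have := Finset.card_le_univ (A ∪ B)
      simp only [Finset.card_univ, Fintype.card_fin] at this
      exact_mod_cast this
    have hsum : ((A ∪ B).card : ℝ) + (A ∩ B).card = A.card + B.card := by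
      exact_mod_cast Finset.card_union_add_card_inter A B
    have hABcard : (η - ζ) * n ≤ ((A ∩ B).card : ℝ) := by linarith
    have key : ∀ f ∈ A ∩ B, ∃ w', μ.mf f = some w' ∧ w' ≠ w₀ ∧
        Satisfies M lam (satisfyM lam f w₀) f w₀ ∧
        Sc μ (satisfyM lam f w₀) + 1 = Sc μ lam ∧
        (satisfyM lam f w₀).mw w' = none := by
      intro f hf
      rw [Finset.mem_inter, hA_def, hB_def, Finset.mem_filter, Finset.mem_filter] at hf
      obtain ⟨⟨-, hfp⟩, -, hfa⟩ := hf
      obtain ⟨w', hw'⟩ := perfect_mf M hst f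
      have hlamf : lam.mf f = some w' := hfa.trans hw'
      have hlt : M.fpref f w₀ < M.fpref f w' := hfp w' hw'
      have hne' : w' ≠ w₀ := by rintro rfl; exact lt_irrefl _ hlt
      have hblock : Blocking M lam f w₀ := by
        refine ⟨?_, ?_, ?_⟩
        · rw [hlamf]; intro h; exact hne' (Option.some_injective _ h)
        · rw [hfa]; exact hfp
        · intro f' hf'; rw [hw₀] at hf'; simp at hf'
      have hsat := satisfies_satisfyM M lam hblock
      have hmw'un : (satisfyM lam f w₀).mw w' = none := by
        simp [satisfyM, if_neg hne', hlamf]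
      have hSc : Sc μ (satisfyM lam f w₀) + 1 = Sc μ lam := by
        refine Sc_succ f hfa ?_ ?_
        · rw [satisfyM_mf_self, hw']
          intro h; exact hne' (Option.some_injective _ h).symm
        · intro f' hne''
          have : (satisfyM lam f w₀).mf f' = lam.mf f' := by
            simp [satisfyM, if_neg hne'', hw₀]
          rw [this]
      exact ⟨w', hw', hne', hsat, hSc, hmw'un⟩
    constructor
    · refine le_trans hABcard ?_
      have := card_le_nat_card (Q := fun p : Fin n × Fin n =>
          ∃ lam', Satisfies M lam lam' p.1 p.2 ∧ Sc μ lam' + 1 = Sc μ lam)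
        (A ∩ B) (fun f => (f, w₀))
        (fun a _ b _ h => (Prod.ext_iff.mp h).1)
        (fun f hf => by
          obtain ⟨w', _, _, hsat, hSc, _⟩ := key f hf
          exact ⟨satisfyM lam f w₀, hsat, hSc⟩)
      exact_mod_cast this
    · set C := (A ∩ B).filter (fun f => ¬ μ.mf f = some wbar) with hC_def
      have hCcard : (A ∩ B).card ≤ C.card + 1 := by
        have hsplit : ((A ∩ B).filter (fun f => μ.mf f = some wbar)).card + C.card
            = (A ∩ B).card := by
          rw [hC_def]
          simpa using Finset.card_filter_add_card_filter_not
            (s := A ∩ B) (p := fun f => μ.mf f = some wbar)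
        have hD : ((A ∩ B).filter (fun f => μ.mf f = some wbar)).card ≤ 1 := by
          refine Finset.card_le_one.mpr ?_
          intro a ha b hb
          rw [Finset.mem_filter] at ha hb
          have h1' := (μ.consistent a wbar).mp ha.2
          have h2' := (μ.consistent b wbar).mp hb.2
          exact Option.some_injective _ (h1'.symm.trans h2')
        omega
      have hCreal : (η - ζ) * n - 1 ≤ (C.card : ℝ) := by
        have : ((A ∩ B).card : ℝ) ≤ (C.card : ℝ) + 1 := by exact_mod_cast hCcard
        linarith
      refine le_trans hCreal ?_
      have := card_le_nat_card (Q := fun p : Fin n × Fin n =>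
          ∃ lam', Satisfies M lam lam' p.1 p.2 ∧ Sc μ lam' + 1 = Sc μ lam ∧
            UnmatchedOutside lam' fbar wbar)
        C (fun f => (f, w₀))
        (fun a _ b _ h => (Prod.ext_iff.mp h).1)
        (fun f hf => by
          rw [hC_def, Finset.mem_filter] at hf
          obtain ⟨hf, hwbar⟩ := hf
          obtain ⟨w', hw', hne', hsat, hSc, hmw'un⟩ := key f hf
          have hwb : w' ≠ wbar := fun e => hwbar (e ▸ hw')
          exact ⟨satisfyM lam f w₀, hsat, hSc, Or.inr ⟨w', hwb, hmw'un⟩⟩)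
      exact_mod_cast this
end

section
/- Let a matching market of size n (all pairs mutually acceptable) have a unique stable matching μ, and let λ be any matching. Then: (a) every blocking pair of λ whose satisfaction yields a matching λ' with S(λ') = S(λ) + 1 is of the form (f, μ(f)) for a firm f with λ(f) ≠ μ(f), so the number of such blocking pairs is at most n − S(λ); and (b) for any designated firm f̄ and worker w̄, if some agent outside {f̄, w̄} is unmatched under λ, then at most two blocking pairs of λ yield a matching λ' under which every unmatched agent belongs to {f̄, w̄}. -/
variable {n : ℕ}

section Aux

variable {n : ℕ}

lemma mw_get' (μ : Matching n) (f : Fin n) (h : (μ.mf f).isSome) :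
    μ.mw ((μ.mf f).get h) = some f := (μ.consistent f _).1 (Option.some_get h).symm

lemma mf_get' (μ : Matching n) (w : Fin n) (h : (μ.mw w).isSome) :
    μ.mf ((μ.mw w).get h) = some w := (μ.consistent _ w).2 (Option.some_get h).symm

lemma card_matched' (μ : Matching n) :
    Fintype.card {f // (μ.mf f).isSome} = Fintype.card {w // (μ.mw w).isSome} := by
  apply Fintype.card_congr
  refine ⟨fun p => ⟨(μ.mf p.1).get p.2, by rw [mw_get']; rfl⟩,
          fun p => ⟨(μ.mw p.1).get p.2, by rw [mf_get']; rfl⟩, ?_, ?_⟩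
  · rintro ⟨f, hf⟩
    exact Subtype.ext (Option.get_of_mem _ (mw_get' μ f hf))
  · rintro ⟨w, hw⟩
    exact Subtype.ext (Option.get_of_mem _ (mf_get' μ w hw))

lemma stable_perfect (M : Market n) (μ : Matching n) (hst : Stable M μ) (f : Fin n) :
    μ.mf f ≠ none := by
  intro hf
  have hex : ∃ w, μ.mw w = none := by
    by_contra h
    push_neg at h
    have h1 : Fintype.card {w // (μ.mw w).isSome} = n := by
      rw [Fintype.card_of_subtype Finset.univ (by
        intro w; simp [Option.isSome_iff_ne_none, h w])]
      simp
    have h2 : Fintype.card {g // (μ.mf g).isSome} < n := by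
      have := Fintype.card_subtype_lt (p := fun g => (μ.mf g).isSome) (x := f)
        (by simp [hf])
      simpa using this
    rw [card_matched' μ, h1] at h2
    exact lt_irrefl _ h2
  obtain ⟨w, hw⟩ := hex
  exact hst f w ⟨by simp [hf], by simp [FPrefOver, hf], by simp [WPrefOver, hw]⟩

lemma sc_le (μ lam lam' : Matching n)
    (h : ∀ g, lam'.mf g = μ.mf g → lam.mf g = μ.mf g) : Sc μ lam' ≤ Sc μ lam :=
  Nat.card_le_card_of_injective (fun p => ⟨p.1, h p.1 p.2⟩)
    (by rintro ⟨p, hp⟩ ⟨q, hq⟩ hpq; simpa using hpq)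

lemma part_a (M : Market n) (μ : Matching n) (hst : Stable M μ) (lam : Matching n)
    (f w : Fin n) (h : ∃ lam', Satisfies M lam lam' f w ∧ Sc μ lam' = Sc μ lam + 1) :
    μ.mf f = some w ∧ lam.mf f ≠ μ.mf f := by
  obtain ⟨lam', ⟨hb, hfw, _, hdrop, hkeepf, _⟩, hsc⟩ := h
  have hμf : μ.mf f = some w := by
    by_contra hne
    have hle : Sc μ lam' ≤ Sc μ lam := by
      apply sc_le
      intro g hg
      by_cases hgf : g = f
      · subst hgf; rw [hfw] at hg; exact absurd hg.symm hne
      · by_cases hgw : lam.mw w = some g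
        · rw [hdrop g hgw] at hg
          exact absurd hg.symm (stable_perfect M μ hst g)
        · rw [← hkeepf g hgf hgw]; exact hg
    omega
  exact ⟨hμf, by rw [hμf]; exact hb.1⟩

lemma card_compl' (μ lam : Matching n) :
    Nat.card {f : Fin n // lam.mf f ≠ μ.mf f} = n - Sc μ lam := by
  simp only [Sc, Nat.card_eq_fintype_card, ne_eq]
  rw [Fintype.card_subtype_compl]
  simp

end Aux

/-- **Counting stabilizing blocking pairs**: (a) every blocking pair of `lam`
whose satisfaction increases `S` by one is a stable pair `(f, μ(f))` with
`lam(f) ≠ μ(f)`, so there are at most `n - S(lam)` such pairs; (b) if some agent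
outside `{fbar, wbar}` is unmatched under `lam`, then at most two blocking pairs
of `lam` yield a matching under which every unmatched agent is in `{fbar, wbar}`. -/
theorem stmt16 (M : Market n) (μ : Matching n) (hst : Stable M μ)
    (huniq : ∀ μ'' : Matching n, Stable M μ'' → μ'' = μ) (lam : Matching n) :
    (∀ f w : Fin n,
      (∃ lam', Satisfies M lam lam' f w ∧ Sc μ lam' = Sc μ lam + 1) →
        μ.mf f = some w ∧ lam.mf f ≠ μ.mf f) ∧
    (Nat.card {p : Fin n × Fin n //
        ∃ lam', Satisfies M lam lam' p.1 p.2 ∧ Sc μ lam' = Sc μ lam + 1} ≤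
      n - Sc μ lam) ∧
    (∀ fbar wbar : Fin n, UnmatchedOutside lam fbar wbar →
      Nat.card {p : Fin n × Fin n //
          ∃ lam', Satisfies M lam lam' p.1 p.2 ∧ ¬ UnmatchedOutside lam' fbar wbar} ≤ 2) := by
  refine ⟨part_a M μ hst lam, ?_, ?_⟩
  · rw [← card_compl' μ lam]
    apply Nat.card_le_card_of_injective
      (fun p : {p : Fin n × Fin n //
          ∃ lam', Satisfies M lam lam' p.1 p.2 ∧ Sc μ lam' = Sc μ lam + 1} =>
        (⟨p.1.1, (part_a M μ hst lam p.1.1 p.1.2 p.2).2⟩ :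
          {f : Fin n // lam.mf f ≠ μ.mf f}))
    rintro ⟨⟨f1, w1⟩, h1⟩ ⟨⟨f2, w2⟩, h2⟩ heq
    have hf : f1 = f2 := congrArg Subtype.val heq
    subst hf
    have e1 := (part_a M μ hst lam f1 w1 h1).1
    have e2 := (part_a M μ hst lam f1 w2 h2).1
    have hw : w1 = w2 := Option.some.inj (e1.symm.trans e2)
    subst hw; rfl
  · intro fbar wbar hU
    have h2 : (2 : ℕ) = Nat.card Bool := by simp [Nat.card_eq_fintype_card]
    rw [h2]
    rcases hU with ⟨f0, hf0ne, hf0⟩ | ⟨w0, hw0ne, hw0⟩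
    · -- an unmatched firm f0 ≠ fbar exists
      have key : ∀ (f w : Fin n) (lam' : Matching n),
          Satisfies M lam lam' f w → ¬ UnmatchedOutside lam' fbar wbar →
          f = f0 ∧ (lam.mw w = none ∨ lam.mw w = some fbar) := by
        intro f w lam' hs hnu
        simp only [UnmatchedOutside, not_or, not_exists, not_and] at hnu
        obtain ⟨hnf, hnw⟩ := hnu
        obtain ⟨hb, hfw, hfree1, hdrop, hkeepf, hkeepw⟩ := hs
        constructor
        · by_contra hne
          have hnot : lam.mw w ≠ some f0 := by
            intro hc
            exact absurd ((lam.consistent f0 w).2 hc) (by simp [hf0])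
          have := hkeepf f0 (Ne.symm hne) hnot
          rw [hf0] at this
          exact hnf f0 hf0ne this
        · cases hcw : lam.mw w with
          | none => exact Or.inl rfl
          | some f' =>
            right
            have hnone := hdrop f' hcw
            by_cases hfb : f' = fbar
            · rw [hfb]
            · exact absurd hnone (hnf f' hfb)
      apply Nat.card_le_card_of_injective
        (fun p : {p : Fin n × Fin n //
            ∃ lam', Satisfies M lam lam' p.1 p.2 ∧ ¬ UnmatchedOutside lam' fbar wbar} =>
          (lam.mw p.1.2).isNone)
      rintro ⟨⟨f1, w1⟩, lam1, hs1, hnu1⟩ ⟨⟨f2, w2⟩, lam2, hs2, hnu2⟩ heq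
      simp only at heq
      obtain ⟨hf1, hc1⟩ := key f1 w1 lam1 hs1 hnu1
      obtain ⟨hf2, hc2⟩ := key f2 w2 lam2 hs2 hnu2
      have hf12 : f1 = f2 := hf1.trans hf2.symm
      have hw12 : w1 = w2 := by
        rcases hc1 with hn1 | hm1
        · rcases hc2 with hn2 | hm2
          · -- both unmatched workers
            by_contra hne
            -- use lam1: w2 stays unmatched
            obtain ⟨hb, hfw, hfree1, hdrop, hkeepf, hkeepw⟩ := hs1
            have hnot : lam.mf f1 ≠ some w2 := by
              intro hc
              exact absurd ((lam.consistent f1 w2).1 hc) (by simp [hn2])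
            have e1 : lam1.mw w2 = none := by
              rw [hkeepw w2 (Ne.symm hne) hnot]; exact hn2
            simp only [UnmatchedOutside, not_or, not_exists, not_and] at hnu1
            have hw2bar : w2 = wbar := by
              by_contra hb2
              exact hnu1.2 w2 hb2 e1
            -- symmetric: w1 = wbar using lam2
            obtain ⟨hb', hfw', hfree1', hdrop', hkeepf', hkeepw'⟩ := hs2
            have hnot' : lam.mf f2 ≠ some w1 := by
              intro hc
              exact absurd ((lam.consistent f2 w1).1 hc) (by simp [hn1])
            have e2 : lam2.mw w1 = none := by
              rw [hkeepw' w1 hne hnot']; exact hn1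
            simp only [UnmatchedOutside, not_or, not_exists, not_and] at hnu2
            have hw1bar : w1 = wbar := by
              by_contra hb1
              exact hnu2.2 w1 hb1 e2
            exact hne (hw1bar.trans hw2bar.symm)
          · rw [hn1, hm2] at heq; simp at heq
        · rcases hc2 with hn2 | hm2
          · rw [hm1, hn2] at heq; simp at heq
          · have := ((lam.consistent fbar w1).2 hm1).symm.trans
              ((lam.consistent fbar w2).2 hm2)
            exact Option.some.inj this
      exact Subtype.ext (Prod.ext hf12 hw12)
    · -- an unmatched worker w0 ≠ wbar exists
      have key : ∀ (f w : Fin n) (lam' : Matching n),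
          Satisfies M lam lam' f w → ¬ UnmatchedOutside lam' fbar wbar →
          w = w0 ∧ (lam.mf f = none ∨ lam.mf f = some wbar) := by
        intro f w lam' hs hnu
        simp only [UnmatchedOutside, not_or, not_exists, not_and] at hnu
        obtain ⟨hnf, hnw⟩ := hnu
        obtain ⟨hb, hfw, hfree1, hdrop, hkeepf, hkeepw⟩ := hs
        constructor
        · by_contra hne
          have hnot : lam.mf f ≠ some w0 := by
            intro hc
            exact absurd ((lam.consistent f w0).1 hc) (by simp [hw0])
          have := hkeepw w0 (Ne.symm hne) hnot
          rw [hw0] at this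
          exact hnw w0 hw0ne this
        · cases hcf : lam.mf f with
          | none => exact Or.inl rfl
          | some w' =>
            right
            have hnone := hfree1 w' hcf
            by_cases hwb : w' = wbar
            · rw [hwb]
            · exact absurd hnone (hnw w' hwb)
      apply Nat.card_le_card_of_injective
        (fun p : {p : Fin n × Fin n //
            ∃ lam', Satisfies M lam lam' p.1 p.2 ∧ ¬ UnmatchedOutside lam' fbar wbar} =>
          (lam.mf p.1.1).isNone)
      rintro ⟨⟨f1, w1⟩, lam1, hs1, hnu1⟩ ⟨⟨f2, w2⟩, lam2, hs2, hnu2⟩ heq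
      simp only at heq
      obtain ⟨hw1, hc1⟩ := key f1 w1 lam1 hs1 hnu1
      obtain ⟨hw2, hc2⟩ := key f2 w2 lam2 hs2 hnu2
      have hw12 : w1 = w2 := hw1.trans hw2.symm
      have hf12 : f1 = f2 := by
        rcases hc1 with hn1 | hm1
        · rcases hc2 with hn2 | hm2
          · by_contra hne
            obtain ⟨hb, hfw, hfree1, hdrop, hkeepf, hkeepw⟩ := hs1
            have hnot : lam.mw w1 ≠ some f2 := by
              intro hc
              exact absurd ((lam.consistent f2 w1).2 hc) (by simp [hn2])
            have e1 : lam1.mf f2 = none := by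
              rw [hkeepf f2 (Ne.symm hne) hnot]; exact hn2
            simp only [UnmatchedOutside, not_or, not_exists, not_and] at hnu1
            have hf2bar : f2 = fbar := by
              by_contra hb2
              exact hnu1.1 f2 hb2 e1
            obtain ⟨hb', hfw', hfree1', hdrop', hkeepf', hkeepw'⟩ := hs2
            have hnot' : lam.mw w2 ≠ some f1 := by
              intro hc
              exact absurd ((lam.consistent f1 w2).2 hc) (by simp [hn1])
            have e2 : lam2.mf f1 = none := by
              rw [hkeepf' f1 hne hnot']; exact hn1
            simp only [UnmatchedOutside, not_or, not_exists, not_and] at hnu2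
            have hf1bar : f1 = fbar := by
              by_contra hb1
              exact hnu2.1 f1 hb1 e2
            exact hne (hf1bar.trans hf2bar.symm)
          · rw [hn1, hm2] at heq; simp at heq
        · rcases hc2 with hn2 | hm2
          · rw [hm1, hn2] at heq; simp at heq
          · have := ((lam.consistent f1 wbar).1 hm1).symm.trans
              ((lam.consistent f2 wbar).1 hm2)
            exact Option.some.inj this
      exact Subtype.ext (Prod.ext hf12 hw12)
end

section
/- In a matching market of size n (all pairs mutually acceptable), fix a designated firm f̄ and a designated worker w̄. Let λ_0 be an unstable matching under which every unmatched agent belongs to {f̄, w̄}. Then for every sequence λ_0, λ_1, λ_2, λ_3 in which each λ_{i+1} is obtained from λ_i by satisfying a blocking pair of λ_i, there exists i ∈ {1, 2, 3} such that some agent outside {f̄, w̄} is unmatched under λ_i. -/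
variable {n : ℕ}

lemma matched_of_inside {lam : Matching n} {fbar wbar : Fin n}
    (h : ¬ UnmatchedOutside lam fbar wbar) :
    (∀ f, f ≠ fbar → lam.mf f ≠ none) ∧ (∀ w, w ≠ wbar → lam.mw w ≠ none) := by
  rw [UnmatchedOutside] at h
  push_neg at h
  exact h

lemma keystep (M : Market n) {lam lam' : Matching n} {fbar wbar f w : Fin n}
    (hin : ¬ UnmatchedOutside lam fbar wbar)
    (hin' : ¬ UnmatchedOutside lam' fbar wbar)
    (hs : Satisfies M lam lam' f w) :
    (lam.mf f = some wbar ∨ (f = fbar ∧ lam.mf f = none)) ∧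
    (lam.mw w = some fbar ∨ (w = wbar ∧ lam.mw w = none)) := by
  obtain ⟨_, _, hw', hf', _, _⟩ := hs
  obtain ⟨hinf, hinw⟩ := matched_of_inside hin
  obtain ⟨hinf', hinw'⟩ := matched_of_inside hin'
  constructor
  · rcases hmf : lam.mf f with _ | w'
    · by_cases hf : f = fbar
      · exact Or.inr ⟨hf, rfl⟩
      · exact absurd hmf (hinf f hf)
    · left
      by_cases hw : w' = wbar
      · rw [hw]
      · exact absurd (hw' w' hmf) (hinw' w' hw)
  · rcases hmw : lam.mw w with _ | f'
    · by_cases hw : w = wbar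
      · exact Or.inr ⟨hw, rfl⟩
      · exact absurd hmw (hinw w hw)
    · left
      by_cases hf : f' = fbar
      · rw [hf]
      · exact absurd (hf' f' hmw) (hinf' f' hf)

/-- From a state where `fbar` is matched to `wbar`, any satisfying step leaves
someone outside unmatched. -/
lemma fromD (M : Market n) {lam lam' : Matching n} {fbar wbar f w : Fin n}
    (hD : lam.mf fbar = some wbar)
    (hin : ¬ UnmatchedOutside lam fbar wbar)
    (hs : Satisfies M lam lam' f w) :
    UnmatchedOutside lam' fbar wbar := by
  by_contra hin'
  obtain ⟨h1, h2⟩ := keystep M hin hin' hs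
  have hDw : lam.mw wbar = some fbar := (lam.consistent fbar wbar).mp hD
  have hf : f = fbar := by
    rcases h1 with h1 | ⟨hf, hnone⟩
    · have := (lam.consistent f wbar).mp h1
      rw [hDw] at this
      exact (Option.some_inj.mp this).symm
    · exact hf
  have hw : w = wbar := by
    rcases h2 with h2 | ⟨hw, hnone⟩
    · have := (lam.consistent fbar w).mpr h2
      rw [hD] at this
      exact (Option.some_inj.mp this).symm
    · exact hw
  subst hf; subst hw
  exact hs.1.1 hD

/-- From a state where both `fbar` and `wbar` are unmatched, a step staying
inside must match them to each other. -/
lemma fromA (M : Market n) {lam lam' : Matching n} {fbar wbar f w : Fin n}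
    (hAf : lam.mf fbar = none) (hAw : lam.mw wbar = none)
    (hin : ¬ UnmatchedOutside lam fbar wbar)
    (hin' : ¬ UnmatchedOutside lam' fbar wbar)
    (hs : Satisfies M lam lam' f w) :
    lam'.mf fbar = some wbar := by
  obtain ⟨h1, h2⟩ := keystep M hin hin' hs
  have hf : f = fbar := by
    rcases h1 with h1 | ⟨hf, _⟩
    · have := (lam.consistent f wbar).mp h1
      rw [hAw] at this; exact absurd this (by simp)
    · exact hf
  have hw : w = wbar := by
    rcases h2 with h2 | ⟨hw, _⟩
    · have := (lam.consistent fbar w).mpr h2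
      rw [hAf] at this; exact absurd this (by simp)
    · exact hw
  subst hf; subst hw
  exact hs.2.1

/-- **Reinstatement of condition (⋆)**: if `lam0` is unstable and every unmatched
agent of `lam0` belongs to `{fbar, wbar}`, then along any three successive
satisfactions of blocking pairs `lam0 → lam1 → lam2 → lam3`, at least one of
`lam1`, `lam2`, `lam3` leaves some agent outside `{fbar, wbar}` unmatched. -/
theorem stmt17 (M : Market n) (fbar wbar : Fin n)
    (lam0 lam1 lam2 lam3 : Matching n)
    (hunstable : ¬ Stable M lam0)
    (hmatched : ¬ UnmatchedOutside lam0 fbar wbar)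
    (h1 : ∃ f w, Satisfies M lam0 lam1 f w)
    (h2 : ∃ f w, Satisfies M lam1 lam2 f w)
    (h3 : ∃ f w, Satisfies M lam2 lam3 f w) :
    UnmatchedOutside lam1 fbar wbar ∨ UnmatchedOutside lam2 fbar wbar ∨
      UnmatchedOutside lam3 fbar wbar := by
  obtain ⟨f1, w1, hs1⟩ := h1
  obtain ⟨f2, w2, hs2⟩ := h2
  obtain ⟨f3, w3, hs3⟩ := h3
  by_cases hin1 : UnmatchedOutside lam1 fbar wbar
  · exact Or.inl hin1
  obtain ⟨h1a, h1b⟩ := keystep M hmatched hin1 hs1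
  rcases h1a with h1a | ⟨hf1, hfnone⟩
  · -- f1's old partner is wbar, so wbar unmatched in lam1
    have hw1none : lam1.mw wbar = none := hs1.2.2.1 wbar h1a
    -- and f1's old partner's ... get fbar unmatched in lam1
    have hfbnone : lam1.mf fbar = none := by
      rcases h1b with h1b | ⟨hw, hwnone⟩
      · exact hs1.2.2.2.1 fbar h1b
      · -- lam0.mw w1 = none with w1 = wbar; but lam0.mf f1 = some wbar contradicts
        have := (lam0.consistent f1 wbar).mp h1a
        rw [hw] at hwnone
        rw [hwnone] at this
        exact absurd this (by simp)
    -- lam1 is state A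
    by_cases hin2 : UnmatchedOutside lam2 fbar wbar
    · exact Or.inr (Or.inl hin2)
    have hD2 := fromA M hfbnone hw1none hin1 hin2 hs2
    exact Or.inr (Or.inr (fromD M hD2 hin2 hs3))
  · -- f1 = fbar was unmatched
    rcases h1b with h1b | ⟨hw1, hwnone⟩
    · -- w1's old partner is fbar; but f1 = fbar unmatched
      rw [← hf1] at h1b
      have := (lam0.consistent f1 w1).mpr h1b
      rw [hfnone] at this
      exact absurd this (by simp)
    · -- both unmatched: lam1.mf fbar = some wbar, state D
      have hD1 : lam1.mf fbar = some wbar := by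
        rw [← hf1, ← hw1]; exact hs1.2.1
      exact Or.inr (Or.inl (fromD M hD1 hin1 hs2))
end

section
/- Fix p ∈ (4/5, 1] and ζ ∈ (0, 1). For each n ∈ ℕ let k := ⌈(1−ζ)n⌉ and let (S_i)_{i≥0} be the Markov chain on the integers with S_0 = k and transitions: from state k the chain moves to k + 4 with probability 1; from any state s with k < s < n the chain moves to s − 1 with probability p and to s + 4 with probability 1 − p; every state s ≥ n is absorbing. Then there exist c > 0 and N ∈ ℕ such that for all n ≥ N, the probability that S_i ≥ n for some i ≤ 2^{cn} is at most 2^{-cn}. -/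
open MeasureTheory
open scoped ENNReal
set_option linter.unusedSectionVars false

/-- `X` is the Markov chain on the integers described in the statement: it starts
at `k`; from `k` it deterministically jumps to `k + 4`; from any state `s` with
`k < s < n` it moves to `s - 1` with probability `p` and to `s + 4` with
probability `1 - p`; every state `≥ n` is absorbing.  The Markov property and the
transition probabilities are expressed through cylinder (history) events. -/
structure IsBiasedWalk (p : ℝ) (k n : ℤ) {Ω : Type*} [MeasurableSpace Ω]
    (P : Measure Ω) (X : ℕ → Ω → ℤ) : Prop where
  measurable : ∀ i, Measurable (X i)
  init : ∀ᵐ ω ∂P, X 0 ω = k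
  from_k : ∀ (i : ℕ) (h : ℕ → ℤ), h i = k →
    P {ω | (∀ j ≤ i, X j ω = h j) ∧ X (i + 1) ω = k + 4} =
      P {ω | ∀ j ≤ i, X j ω = h j}
  down : ∀ (i : ℕ) (h : ℕ → ℤ), k < h i → h i < n →
    P {ω | (∀ j ≤ i, X j ω = h j) ∧ X (i + 1) ω = h i - 1} =
      ENNReal.ofReal p * P {ω | ∀ j ≤ i, X j ω = h j}
  up : ∀ (i : ℕ) (h : ℕ → ℤ), k < h i → h i < n →
    P {ω | (∀ j ≤ i, X j ω = h j) ∧ X (i + 1) ω = h i + 4} =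
      ENNReal.ofReal (1 - p) * P {ω | ∀ j ≤ i, X j ω = h j}
  absorbing : ∀ (i : ℕ) (h : ℕ → ℤ), n ≤ h i →
    P {ω | (∀ j ≤ i, X j ω = h j) ∧ X (i + 1) ω = h i} =
      P {ω | ∀ j ≤ i, X j ω = h j}

namespace BiasedWalkAux

/-- history extension -/
def hfun (i : ℕ) (v : Fin i → ℤ) (s : ℤ) : ℕ → ℤ :=
  fun j => if hj : j < i then v ⟨j, hj⟩ else s

lemma hfun_i (i : ℕ) (v : Fin i → ℤ) (s : ℤ) : hfun i v s i = s := by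
  simp [hfun]

section

variable {Ω : Type*} [MeasurableSpace Ω] {P : Measure Ω} {X : ℕ → Ω → ℤ}
  {p : ℝ} {k n : ℤ}

lemma mCyl (hX : ∀ i, Measurable (X i)) (i : ℕ) (h : ℕ → ℤ) :
    MeasurableSet {ω | ∀ j ≤ i, X j ω = h j} := by
  have : {ω | ∀ j ≤ i, X j ω = h j} = ⋂ j ∈ Set.Iic i, (X j) ⁻¹' {h j} := by
    ext ω; simp [Set.mem_iInter]
  rw [this]
  exact MeasurableSet.biInter (Set.to_countable _) fun j _ => (hX j) (measurableSet_singleton _)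

lemma decomp (hX : ∀ i, Measurable (X i)) (i : ℕ) (s : ℤ) (E : Set Ω) (hE : MeasurableSet E) :
    P ({ω | X i ω = s} ∩ E) =
      ∑' v : Fin i → ℤ, P ({ω | ∀ j ≤ i, X j ω = hfun i v s j} ∩ E) := by
  have hdisj : Pairwise (Function.onFun Disjoint
      fun v : Fin i → ℤ => {ω | ∀ j ≤ i, X j ω = hfun i v s j} ∩ E) := by
    intro v w hvw
    apply Set.disjoint_left.mpr
    rintro ω ⟨h1, -⟩ ⟨h2, -⟩
    apply hvw
    funext j
    have e1 := h1 j.1 (le_of_lt j.2)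
    have e2 := h2 j.1 (le_of_lt j.2)
    rw [e1] at e2
    simpa [hfun, j.2] using e2
  rw [← measure_iUnion hdisj (fun v => (mCyl hX i _).inter hE)]
  congr 1
  ext ω
  simp only [Set.mem_iUnion, Set.mem_inter_iff, Set.mem_setOf_eq]
  constructor
  · rintro ⟨hs, hEω⟩
    refine ⟨fun j => X j.1 ω, ⟨fun j hj => ?_, hEω⟩⟩
    unfold hfun
    split
    · rfl
    · have : j = i := by omega
      rw [this, hs]
  · rintro ⟨v, hv, hEω⟩
    refine ⟨?_, hEω⟩
    have := hv i le_rfl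
    rwa [hfun_i] at this

lemma decompU (hX : ∀ i, Measurable (X i)) (i : ℕ) (s : ℤ) :
    P {ω | X i ω = s} = ∑' v : Fin i → ℤ, P {ω | ∀ j ≤ i, X j ω = hfun i v s j} := by
  have := decomp (P := P) hX i s Set.univ MeasurableSet.univ
  simpa using this

lemma step_down (walk : IsBiasedWalk p k n P X) (i : ℕ) (s : ℤ) (h1 : k < s) (h2 : s < n) :
    P ({ω | X i ω = s} ∩ {ω | X (i+1) ω = s - 1}) = ENNReal.ofReal p * P {ω | X i ω = s} := by
  have hmX := walk.measurable
  rw [decomp (E := {ω | X (i+1) ω = s - 1}) hmX i s ((hmX (i+1)) (measurableSet_singleton _)),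
    decompU hmX i s, ← ENNReal.tsum_mul_left]
  apply tsum_congr
  intro v
  have := walk.down i (hfun i v s) (by rw [hfun_i]; exact h1) (by rw [hfun_i]; exact h2)
  rw [hfun_i] at this
  exact this

lemma step_up (walk : IsBiasedWalk p k n P X) (i : ℕ) (s : ℤ) (h1 : k < s) (h2 : s < n) :
    P ({ω | X i ω = s} ∩ {ω | X (i+1) ω = s + 4}) =
      ENNReal.ofReal (1 - p) * P {ω | X i ω = s} := by
  have hmX := walk.measurable
  rw [decomp (E := {ω | X (i+1) ω = s + 4}) hmX i s ((hmX (i+1)) (measurableSet_singleton _)),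
    decompU hmX i s, ← ENNReal.tsum_mul_left]
  apply tsum_congr
  intro v
  have := walk.up i (hfun i v s) (by rw [hfun_i]; exact h1) (by rw [hfun_i]; exact h2)
  rw [hfun_i] at this
  exact this

lemma step_k (walk : IsBiasedWalk p k n P X) (i : ℕ) :
    P ({ω | X i ω = k} ∩ {ω | X (i+1) ω = k + 4}) = P {ω | X i ω = k} := by
  have hmX := walk.measurable
  rw [decomp (E := {ω | X (i+1) ω = k + 4}) hmX i k ((hmX (i+1)) (measurableSet_singleton _)),
    decompU hmX i k]
  apply tsum_congr
  intro v
  exact walk.from_k i (hfun i v k) (hfun_i i v k)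

lemma step_abs (walk : IsBiasedWalk p k n P X) (i : ℕ) (s : ℤ) (hs : n ≤ s) :
    P ({ω | X i ω = s} ∩ {ω | X (i+1) ω = s}) = P {ω | X i ω = s} := by
  have hmX := walk.measurable
  rw [decomp (E := {ω | X (i+1) ω = s}) hmX i s ((hmX (i+1)) (measurableSet_singleton _)),
    decompU hmX i s]
  apply tsum_congr
  intro v
  have := walk.absorbing i (hfun i v s) (by rw [hfun_i]; exact hs)
  rw [hfun_i] at this
  exact this

lemma cancel_aux {a b : ℝ≥0∞} (ha : a ≠ ⊤) (h : a = a + b) : b = 0 := by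
  have h2 : a + b = a + 0 := by rw [add_zero]; exact h.symm
  exact (ENNReal.add_right_inj ha).mp h2

lemma split2 (hX : ∀ i, Measurable (X i)) (i : ℕ) (s t : ℤ) (B : Set Ω)
    (hB : MeasurableSet B) :
    P ({ω | X i ω = s} ∩ B) = P (({ω | X i ω = s} ∩ B) ∩ {ω | X (i+1) ω = t}) +
      P (({ω | X i ω = s} ∩ B) ∩ {ω | X (i+1) ω ≠ t}) := by
  rw [← measure_union]
  · congr 1
    ext ω
    by_cases hω : X (i+1) ω = t <;> simp [hω]
  · exact Set.disjoint_left.mpr (by rintro ω ⟨-, h1⟩ ⟨-, h2⟩; exact h2 h1)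
  · exact (((hX i) (measurableSet_singleton s)).inter hB).inter
      ((hX (i+1)) (measurableSet_singleton t)).compl

variable [IsProbabilityMeasure P]

lemma J_zero_k (walk : IsBiasedWalk p k n P X) (i : ℕ) (t : ℤ) (ht : t ≠ k + 4) :
    P ({ω | X i ω = k} ∩ {ω | X (i+1) ω = t}) = 0 := by
  have h0 : P ({ω | X i ω = k} ∩ {ω | X (i+1) ω ≠ k + 4}) = 0 := by
    apply cancel_aux (measure_ne_top P {ω | X i ω = k})
    have e1 := split2 (P := P) walk.measurable i k (k+4) Set.univ MeasurableSet.univ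
    simp only [Set.inter_univ] at e1
    rw [step_k walk i] at e1
    exact e1
  apply measure_mono_null _ h0
  intro ω hω
  exact ⟨hω.1, fun h => ht (hω.2.symm.trans h)⟩

lemma J_zero_abs (walk : IsBiasedWalk p k n P X) (i : ℕ) (s t : ℤ) (hs : n ≤ s) (ht : t ≠ s) :
    P ({ω | X i ω = s} ∩ {ω | X (i+1) ω = t}) = 0 := by
  have h0 : P ({ω | X i ω = s} ∩ {ω | X (i+1) ω ≠ s}) = 0 := by
    apply cancel_aux (measure_ne_top P {ω | X i ω = s})
    have e1 := split2 (P := P) walk.measurable i s s Set.univ MeasurableSet.univ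
    simp only [Set.inter_univ] at e1
    rw [step_abs walk i s hs] at e1
    exact e1
  apply measure_mono_null _ h0
  intro ω hω
  exact ⟨hω.1, fun h => ht (hω.2.symm.trans h)⟩

lemma J_zero_int (walk : IsBiasedWalk p k n P X) (hp0 : 0 ≤ p) (hp1 : p ≤ 1)
    (i : ℕ) (s t : ℤ) (h1 : k < s) (h2 : s < n) (ht1 : t ≠ s - 1) (ht2 : t ≠ s + 4) :
    P ({ω | X i ω = s} ∩ {ω | X (i+1) ω = t}) = 0 := by
  have hmX := walk.measurable
  have hsum : ENNReal.ofReal p + ENNReal.ofReal (1 - p) = 1 := by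
    rw [← ENNReal.ofReal_add hp0 (by linarith)]; norm_num
  set A := {ω | X i ω = s}
  set R := (A ∩ {ω | X (i+1) ω ≠ s - 1}) ∩ {ω | X (i+1) ω ≠ s + 4} with hR
  have h0 : P R = 0 := by
    apply cancel_aux (measure_ne_top P A)
    have e1 := split2 (P := P) hmX i s (s - 1) Set.univ MeasurableSet.univ
    simp only [Set.inter_univ] at e1
    have e2 := split2 (P := P) hmX i s (s + 4) {ω | X (i+1) ω ≠ s - 1}
      ((hmX (i+1)) (measurableSet_singleton (s-1))).compl
    have e3 : (A ∩ {ω | X (i+1) ω ≠ s - 1}) ∩ {ω | X (i+1) ω = s + 4} =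
        A ∩ {ω | X (i+1) ω = s + 4} := by
      ext ω
      constructor
      · rintro ⟨⟨a, -⟩, b⟩; exact ⟨a, b⟩
      · rintro ⟨a, b⟩
        refine ⟨⟨a, ?_⟩, b⟩
        have hb : X (i+1) ω = s + 4 := b
        simp only [Set.mem_setOf_eq, hb]
        omega
    rw [e3] at e2
    calc P A = P (A ∩ {ω | X (i+1) ω = s - 1}) + P (A ∩ {ω | X (i+1) ω ≠ s - 1}) := e1
      _ = P (A ∩ {ω | X (i+1) ω = s - 1}) + (P (A ∩ {ω | X (i+1) ω = s + 4}) + P R) := by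
          rw [← hR] at e2; rw [← e2]
      _ = (ENNReal.ofReal p * P A + ENNReal.ofReal (1 - p) * P A) + P R := by
          rw [step_down walk i s h1 h2, step_up walk i s h1 h2, add_assoc]
      _ = P A + P R := by rw [← add_mul, hsum, one_mul]
  apply measure_mono_null _ h0
  intro ω hω
  exact ⟨⟨hω.1, fun h => ht1 (hω.2.symm.trans h)⟩, fun h => ht2 (hω.2.symm.trans h)⟩

lemma m_succ (hX : ∀ i, Measurable (X i)) (i : ℕ) (t : ℤ) :
    P {ω | X (i+1) ω = t} = ∑' s : ℤ, P ({ω | X i ω = s} ∩ {ω | X (i+1) ω = t}) := by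
  rw [← measure_iUnion]
  · congr 1
    ext ω
    simp only [Set.mem_iUnion, Set.mem_inter_iff, Set.mem_setOf_eq]
    constructor
    · intro h; exact ⟨X i ω, rfl, h⟩
    · rintro ⟨s, -, h⟩; exact h
  · intro s t hst
    apply Set.disjoint_left.mpr
    rintro ω ⟨h1, -⟩ ⟨h2, -⟩
    exact hst (h1.symm.trans h2)
  · exact fun s => ((hX i) (measurableSet_singleton s)).inter
      ((hX (i+1)) (measurableSet_singleton t))

lemma J_total (hX : ∀ i, Measurable (X i)) (i : ℕ) (s : ℤ) :
    ∑' t : ℤ, P ({ω | X i ω = s} ∩ {ω | X (i+1) ω = t}) = P {ω | X i ω = s} := by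
  rw [← measure_iUnion]
  · congr 1
    ext ω
    simp only [Set.mem_iUnion, Set.mem_inter_iff, Set.mem_setOf_eq]
    constructor
    · rintro ⟨t, h, -⟩; exact h
    · intro h; exact ⟨X (i+1) ω, h, rfl⟩
  · intro a b hab
    apply Set.disjoint_left.mpr
    rintro ω ⟨-, h1⟩ ⟨-, h2⟩
    exact hab (h1.symm.trans h2)
  · exact fun t => ((hX i) (measurableSet_singleton s)).inter
      ((hX (i+1)) (measurableSet_singleton t))

lemma m0_ne (walk : IsBiasedWalk p k n P X) (s : ℤ) (hs : s ≠ k) :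
    P {ω | X 0 ω = s} = 0 := by
  have h0 : P {ω | ¬ X 0 ω = k} = 0 := by
    have := walk.init
    rwa [MeasureTheory.ae_iff] at this
  apply measure_mono_null _ h0
  intro ω hω
  simp only [Set.mem_setOf_eq] at *
  rw [hω]
  exact hs

lemma m_below (walk : IsBiasedWalk p k n P X) (hp0 : 0 ≤ p) (hp1 : p ≤ 1) :
    ∀ i, ∀ t : ℤ, t < k → P {ω | X i ω = t} = 0 := by
  intro i
  induction i with
  | zero => exact fun t ht => m0_ne walk t (by omega)
  | succ i ih =>
    intro t ht
    rw [m_succ walk.measurable i t]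
    apply ENNReal.tsum_eq_zero.mpr
    intro s
    rcases lt_or_ge s k with hs | hs
    · exact measure_mono_null Set.inter_subset_left (ih s hs)
    rcases eq_or_lt_of_le hs with hs' | hs'
    · rw [← hs']
      exact J_zero_k walk i t (by omega)
    rcases lt_or_ge s n with hs2 | hs2
    · exact J_zero_int walk hp0 hp1 i s t hs' hs2 (by omega) (by omega)
    · exact J_zero_abs walk i s t hs2 (by omega)

lemma abs_stay (walk : IsBiasedWalk p k n P X) (i : ℕ) (s : ℤ) (hs : n ≤ s) :
    P ({ω | X i ω = s} ∩ {ω | X (i+1) ω ≠ s}) = 0 := by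
  apply cancel_aux (measure_ne_top P {ω | X i ω = s})
  have e1 := split2 (P := P) walk.measurable i s s Set.univ MeasurableSet.univ
  simp only [Set.inter_univ] at e1
  rw [step_abs walk i s hs] at e1
  exact e1


variable {lam : ℝ}

lemma g_le (hlam : 1 ≤ lam) {s t : ℤ} (h : min s n ≤ t) :
    ENNReal.ofReal (lam ^ (min s n)) ≤ ENNReal.ofReal (lam ^ t) :=
  ENNReal.ofReal_le_ofReal (zpow_le_zpow_right₀ hlam h)

lemma inner_le (walk : IsBiasedWalk p k n P X) (hp0 : 0 ≤ p) (hp1 : p ≤ 1) (hlam : 1 ≤ lam)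
    (hmaster : ∀ s : ℤ, p * lam ^ (s-1) + (1-p) * lam ^ (s+4) ≤ lam ^ s)
    (i : ℕ) (s : ℤ) :
    ∑' t : ℤ, P ({ω | X i ω = s} ∩ {ω | X (i+1) ω = t}) * ENNReal.ofReal (lam ^ (min t n)) ≤
      P {ω | X i ω = s} * ENNReal.ofReal (lam ^ (min s n)) +
        (if s = k then ENNReal.ofReal (lam ^ (k+4)) else 0) := by
  rcases lt_or_ge s k with hs | hs
  · have hz : P {ω | X i ω = s} = 0 := m_below walk hp0 hp1 i s hs
    have hz2 : ∀ t : ℤ,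
        P ({ω | X i ω = s} ∩ {ω | X (i+1) ω = t}) * ENNReal.ofReal (lam ^ (min t n)) = 0 := by
      intro t
      rw [measure_mono_null Set.inter_subset_left hz, zero_mul]
    rw [tsum_congr hz2, tsum_zero]
    exact zero_le
  rcases eq_or_lt_of_le hs with hs' | hs'
  · -- s = k
    subst hs'
    rw [tsum_eq_single (k+4) (fun t ht =>
      by rw [J_zero_k walk i t ht, zero_mul])]
    rw [step_k walk i, if_pos rfl]
    calc P {ω | X i ω = k} * ENNReal.ofReal (lam ^ (min (k+4) n))
        ≤ 1 * ENNReal.ofReal (lam ^ (k+4)) :=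
          mul_le_mul' prob_le_one (g_le hlam (min_le_left _ _))
      _ = ENNReal.ofReal (lam ^ (k+4)) := one_mul _
      _ ≤ _ := le_add_self
  rcases lt_or_ge s n with hs2 | hs2
  · -- interior
    rw [tsum_eq_sum (s := ({s - 1, s + 4} : Finset ℤ)) (fun t ht => by
      simp only [Finset.mem_insert, Finset.mem_singleton] at ht
      push_neg at ht
      rw [J_zero_int walk hp0 hp1 i s t hs' hs2 ht.1 ht.2, zero_mul])]
    rw [Finset.sum_pair (by omega : s - 1 ≠ s + 4)]
    rw [step_down walk i s hs' hs2, step_up walk i s hs' hs2, if_neg (by omega), add_zero]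
    have e1 : min (s - 1) n = s - 1 := min_eq_left (by omega)
    have e2 : min s n = s := min_eq_left (by omega)
    rw [e1, e2]
    set m := P {ω | X i ω = s}
    have hlam0 : (0:ℝ) < lam := lt_of_lt_of_le one_pos hlam
    calc ENNReal.ofReal p * m * ENNReal.ofReal (lam ^ (s-1)) +
          ENNReal.ofReal (1 - p) * m * ENNReal.ofReal (lam ^ (min (s+4) n))
        ≤ ENNReal.ofReal p * m * ENNReal.ofReal (lam ^ (s-1)) +
          ENNReal.ofReal (1 - p) * m * ENNReal.ofReal (lam ^ (s+4)) := by
          gcongr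
          · exact min_le_left _ _
      _ = m * (ENNReal.ofReal (p * lam ^ (s-1)) + ENNReal.ofReal ((1-p) * lam ^ (s+4))) := by
          rw [ENNReal.ofReal_mul hp0, ENNReal.ofReal_mul (by linarith)]
          ring
      _ = m * ENNReal.ofReal (p * lam ^ (s-1) + (1-p) * lam ^ (s+4)) := by
          rw [← ENNReal.ofReal_add (by positivity) (by
            have : (0:ℝ) ≤ 1 - p := by linarith
            positivity)]
      _ ≤ m * ENNReal.ofReal (lam ^ s) := by
          gcongr
          exact hmaster s
  · -- absorbed
    rw [tsum_eq_single s (fun t ht => by rw [J_zero_abs walk i s t hs2 ht, zero_mul]),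
      step_abs walk i s hs2]
    exact le_self_add

lemma A_rec (walk : IsBiasedWalk p k n P X) (hp0 : 0 ≤ p) (hp1 : p ≤ 1) (hlam : 1 ≤ lam)
    (hmaster : ∀ s : ℤ, p * lam ^ (s-1) + (1-p) * lam ^ (s+4) ≤ lam ^ s) (i : ℕ) :
    ∑' t : ℤ, P {ω | X (i+1) ω = t} * ENNReal.ofReal (lam ^ (min t n)) ≤
      (∑' s : ℤ, P {ω | X i ω = s} * ENNReal.ofReal (lam ^ (min s n))) +
        ENNReal.ofReal (lam ^ (k+4)) := by
  have hstep : ∑' t : ℤ, P {ω | X (i+1) ω = t} * ENNReal.ofReal (lam ^ (min t n)) =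
      ∑' s : ℤ, ∑' t : ℤ,
        P ({ω | X i ω = s} ∩ {ω | X (i+1) ω = t}) * ENNReal.ofReal (lam ^ (min t n)) := by
    rw [← ENNReal.tsum_comm]
    apply tsum_congr
    intro t
    rw [m_succ walk.measurable i t, ENNReal.tsum_mul_right]
  rw [hstep]
  calc ∑' s : ℤ, ∑' t : ℤ,
        P ({ω | X i ω = s} ∩ {ω | X (i+1) ω = t}) * ENNReal.ofReal (lam ^ (min t n))
      ≤ ∑' s : ℤ, (P {ω | X i ω = s} * ENNReal.ofReal (lam ^ (min s n)) +
          (if s = k then ENNReal.ofReal (lam ^ (k+4)) else 0)) :=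
        ENNReal.tsum_le_tsum (inner_le walk hp0 hp1 hlam hmaster i)
    _ = (∑' s : ℤ, P {ω | X i ω = s} * ENNReal.ofReal (lam ^ (min s n))) +
          ∑' s : ℤ, (if s = k then ENNReal.ofReal (lam ^ (k+4)) else 0) := ENNReal.tsum_add
    _ = _ := by rw [tsum_ite_eq]

lemma A_bound (walk : IsBiasedWalk p k n P X) (hp0 : 0 ≤ p) (hp1 : p ≤ 1) (hlam : 1 ≤ lam)
    (hmaster : ∀ s : ℤ, p * lam ^ (s-1) + (1-p) * lam ^ (s+4) ≤ lam ^ s) (i : ℕ) :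
    ∑' s : ℤ, P {ω | X i ω = s} * ENNReal.ofReal (lam ^ (min s n)) ≤
      (i + 1 : ℕ) * ENNReal.ofReal (lam ^ (k+4)) := by
  induction i with
  | zero =>
    calc ∑' s : ℤ, P {ω | X 0 ω = s} * ENNReal.ofReal (lam ^ (min s n))
        ≤ ∑' s : ℤ, (if s = k then ENNReal.ofReal (lam ^ (k+4)) else 0) := by
          apply ENNReal.tsum_le_tsum
          intro s
          by_cases hs : s = k
          · subst hs
            rw [if_pos rfl]
            calc P {ω | X 0 ω = s} * ENNReal.ofReal (lam ^ (min s n))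
                ≤ 1 * ENNReal.ofReal (lam ^ (s+4)) :=
                  mul_le_mul' prob_le_one (g_le hlam (by omega))
              _ = ENNReal.ofReal (lam ^ (s+4)) := one_mul _
          · rw [m0_ne walk s hs, zero_mul, if_neg hs]
      _ = ENNReal.ofReal (lam ^ (k+4)) := tsum_ite_eq _ _
      _ ≤ _ := by
          rw [Nat.cast_one, one_mul]
  | succ i ih =>
    calc ∑' s : ℤ, P {ω | X (i+1) ω = s} * ENNReal.ofReal (lam ^ (min s n))
        ≤ (∑' s : ℤ, P {ω | X i ω = s} * ENNReal.ofReal (lam ^ (min s n))) +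
            ENNReal.ofReal (lam ^ (k+4)) := A_rec walk hp0 hp1 hlam hmaster i
      _ ≤ (i + 1 : ℕ) * ENNReal.ofReal (lam ^ (k+4)) + ENNReal.ofReal (lam ^ (k+4)) := by
          gcongr
      _ = (i + 1 + 1 : ℕ) * ENNReal.ofReal (lam ^ (k+4)) := by
          push_cast
          ring


lemma tail_decomp (hX : ∀ i, Measurable (X i)) (T : ℕ) :
    P {ω | n ≤ X T ω} = ∑' s : {s : ℤ // n ≤ s}, P {ω | X T ω = s.1} := by
  rw [← measure_iUnion]
  · congr 1
    ext ω
    simp only [Set.mem_iUnion, Set.mem_setOf_eq]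
    constructor
    · intro h; exact ⟨⟨X T ω, h⟩, rfl⟩
    · rintro ⟨s, h⟩; rw [h]; exact s.2
  · intro a b hab
    apply Set.disjoint_left.mpr
    rintro ω h1 h2
    simp only [Set.mem_setOf_eq] at h1 h2
    exact hab (Subtype.ext (h1.symm.trans h2))
  · exact fun s => (hX T) (measurableSet_singleton s.1)

lemma tail_bound (walk : IsBiasedWalk p k n P X) (hp0 : 0 ≤ p) (hp1 : p ≤ 1) (hlam : 1 ≤ lam)
    (hmaster : ∀ s : ℤ, p * lam ^ (s-1) + (1-p) * lam ^ (s+4) ≤ lam ^ s) (T : ℕ) :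
    ENNReal.ofReal (lam ^ n) * P {ω | n ≤ X T ω} ≤
      (T + 1 : ℕ) * ENNReal.ofReal (lam ^ (k+4)) := by
  rw [tail_decomp walk.measurable T, ← ENNReal.tsum_mul_left]
  calc ∑' s : {s : ℤ // n ≤ s}, ENNReal.ofReal (lam ^ n) * P {ω | X T ω = s.1}
      = ∑' s : {s : ℤ // n ≤ s}, P {ω | X T ω = s.1} * ENNReal.ofReal (lam ^ (min s.1 n)) := by
        apply tsum_congr
        intro s
        rw [min_eq_right s.2, mul_comm]
    _ ≤ ∑' s : ℤ, P {ω | X T ω = s} * ENNReal.ofReal (lam ^ (min s n)) :=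
        ENNReal.tsum_comp_le_tsum_of_injective Subtype.val_injective
          (fun s => P {ω | X T ω = s} * ENNReal.ofReal (lam ^ (min s n)))
    _ ≤ (T + 1 : ℕ) * ENNReal.ofReal (lam ^ (k+4)) := A_bound walk hp0 hp1 hlam hmaster T

lemma bad_zero (walk : IsBiasedWalk p k n P X) :
    P (⋃ (j : ℕ), ⋃ (s : {s : ℤ // n ≤ s}),
      ({ω | X j ω = s.1} ∩ {ω | X (j+1) ω ≠ s.1})) = 0 := by
  apply measure_iUnion_null
  intro j
  apply measure_iUnion_null
  intro s
  exact abs_stay walk j s.1 s.2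

lemma hit_incl (T : ℕ) :
    {ω | ∃ i : ℕ, i ≤ T ∧ n ≤ X i ω} ⊆ {ω | n ≤ X T ω} ∪
      (⋃ (j : ℕ), ⋃ (s : {s : ℤ // n ≤ s}),
        ({ω | X j ω = s.1} ∩ {ω | X (j+1) ω ≠ s.1})) := by
  intro ω hω
  obtain ⟨i, hiT, hi⟩ := hω
  by_cases hbad : ω ∈ ⋃ (j : ℕ), ⋃ (s : {s : ℤ // n ≤ s}),
      ({ω | X j ω = s.1} ∩ {ω | X (j+1) ω ≠ s.1})
  · exact Or.inr hbad
  · left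
    simp only [Set.mem_iUnion, Set.mem_inter_iff, Set.mem_setOf_eq, not_exists] at hbad
    push_neg at hbad
    have hstay : ∀ j : ℕ, n ≤ X j ω → X (j+1) ω = X j ω := by
      intro j hj
      exact hbad j ⟨X j ω, hj⟩ rfl
    have hstep : ∀ d : ℕ, n ≤ X (i + d) ω := by
      intro d
      induction d with
      | zero => exact hi
      | succ d ih =>
        have := hstay (i + d) ih
        rw [← Nat.add_assoc] at *
        rw [this]
        exact ih
    have : T = i + (T - i) := by omega
    rw [Set.mem_setOf_eq, this]
    exact hstep (T - i)


lemma main_prob (walk : IsBiasedWalk p k n P X) (hp0 : 0 ≤ p) (hp1 : p ≤ 1) (hlam : 1 < lam)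
    (hmaster : ∀ s : ℤ, p * lam ^ (s-1) + (1-p) * lam ^ (s+4) ≤ lam ^ s) (T : ℕ) :
    P {ω | ∃ i : ℕ, i ≤ T ∧ n ≤ X i ω} ≤
      (T + 1 : ℕ) * ENNReal.ofReal (lam ^ (k + 4 - n)) := by
  have hlam0 : (0:ℝ) < lam := lt_trans one_pos hlam
  have h1 : P {ω | ∃ i : ℕ, i ≤ T ∧ n ≤ X i ω} ≤ P {ω | n ≤ X T ω} := by
    calc P {ω | ∃ i : ℕ, i ≤ T ∧ n ≤ X i ω}
        ≤ P ({ω | n ≤ X T ω} ∪ (⋃ (j : ℕ), ⋃ (s : {s : ℤ // n ≤ s}),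
            ({ω | X j ω = s.1} ∩ {ω | X (j+1) ω ≠ s.1}))) := measure_mono (hit_incl T)
      _ ≤ P {ω | n ≤ X T ω} + P (⋃ (j : ℕ), ⋃ (s : {s : ℤ // n ≤ s}),
            ({ω | X j ω = s.1} ∩ {ω | X (j+1) ω ≠ s.1})) := measure_union_le _ _
      _ = P {ω | n ≤ X T ω} := by rw [bad_zero walk, add_zero]
  have hpos : (0:ℝ) < lam ^ n := zpow_pos hlam0 n
  have hne : ENNReal.ofReal (lam ^ n) ≠ 0 := (ENNReal.ofReal_pos.mpr hpos).ne'
  have hfin : ENNReal.ofReal (lam ^ n) ≠ ⊤ := ENNReal.ofReal_ne_top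
  have h2 := tail_bound walk hp0 hp1 hlam.le hmaster T
  calc P {ω | ∃ i : ℕ, i ≤ T ∧ n ≤ X i ω} ≤ P {ω | n ≤ X T ω} := h1
    _ = (ENNReal.ofReal (lam ^ n))⁻¹ * (ENNReal.ofReal (lam ^ n) * P {ω | n ≤ X T ω}) := by
        rw [← mul_assoc, ENNReal.inv_mul_cancel hne hfin, one_mul]
    _ ≤ (ENNReal.ofReal (lam ^ n))⁻¹ * ((T + 1 : ℕ) * ENNReal.ofReal (lam ^ (k+4))) := by
        gcongr
    _ = (T + 1 : ℕ) * ((ENNReal.ofReal (lam ^ n))⁻¹ * ENNReal.ofReal (lam ^ (k+4))) := by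
        ring
    _ = (T + 1 : ℕ) * ENNReal.ofReal (lam ^ (k + 4 - n)) := by
        rw [← ENNReal.ofReal_inv_of_pos hpos,
          ← ENNReal.ofReal_mul (by positivity)]
        congr 1
        rw [← zpow_neg]
        rw [← zpow_add₀ (ne_of_gt hlam0)]
        congr 1
        ring

end

lemma master_of_unit {p lam : ℝ} (hlam : 0 < lam) (h : p * lam⁻¹ + (1-p) * lam^4 ≤ 1) :
    ∀ s : ℤ, p * lam ^ (s-1) + (1-p) * lam ^ (s+4) ≤ lam ^ s := by
  intro s
  have h1 : lam ^ (s-1) = lam ^ s * lam⁻¹ := by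
    rw [zpow_sub₀ (ne_of_gt hlam), zpow_one, div_eq_mul_inv]
  have h2 : lam ^ (s+4) = lam ^ s * lam^4 := by
    rw [zpow_add₀ (ne_of_gt hlam)]
    norm_cast
  calc p * lam ^ (s-1) + (1-p) * lam ^ (s+4)
      = lam ^ s * (p * lam⁻¹ + (1-p) * lam^4) := by rw [h1, h2]; ring
    _ ≤ lam ^ s * 1 := mul_le_mul_of_nonneg_left h (le_of_lt (zpow_pos hlam s))
    _ = lam ^ s := mul_one _

lemma unit_exists {p : ℝ} (hp45 : 4/5 < p) (hp1 : p ≤ 1) :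
    ∃ lam : ℝ, 1 < lam ∧ p * lam⁻¹ + (1-p) * lam^4 ≤ 1 := by
  set ε : ℝ := min (1/4) ((5*p - 4)/6) with hε_def
  have hε1 : 0 < ε := lt_min (by norm_num) (by linarith)
  have hε2 : ε ≤ 1/4 := min_le_left _ _
  have hε3 : ε ≤ (5*p - 4)/6 := min_le_right _ _
  refine ⟨1 + ε, by linarith, ?_⟩
  have hl0 : (0:ℝ) < 1 + ε := by linarith
  have hu : (0:ℝ) ≤ 1 - p := by linarith
  have h5p : 5*(1-p) ≤ 1 - 6*ε := by
    have : 6 * ε ≤ 5*p - 4 := by linarith [hε3]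
    linarith
  have hB : 10 + 10*ε + 5*ε^2 + ε^3 ≤ 13 := by nlinarith [sq_nonneg ε, hε1.le, hε2]
  have key5 : p + (1-p) * (1+ε)^5 ≤ 1 + ε := by
    nlinarith [mul_le_mul_of_nonneg_right h5p hε1.le,
      mul_le_mul_of_nonneg_left hB (mul_nonneg hu (sq_nonneg ε)),
      mul_le_mul_of_nonneg_right h5p (sq_nonneg ε),
      mul_nonneg (mul_nonneg hε1.le hε1.le) hε1.le, sq_nonneg ε]
  have heq : p * (1+ε)⁻¹ + (1-p) * (1+ε)^4 = (p + (1-p) * (1+ε)^5) * (1+ε)⁻¹ := by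
    field_simp
  rw [heq]
  calc (p + (1-p) * (1+ε)^5) * (1+ε)⁻¹ ≤ (1+ε) * (1+ε)⁻¹ :=
        mul_le_mul_of_nonneg_right key5 (inv_nonneg.mpr hl0.le)
    _ = 1 := mul_inv_cancel₀ (ne_of_gt hl0)

end BiasedWalkAux



/-- **Exponential hitting time of a heavily biased random walk**: for
`p ∈ (4/5, 1]` and `ζ ∈ (0,1)`, the walk started at `k = ⌈(1-ζ) n⌉` reaches a
state `≥ n` within `2 ^ (c n)` steps with probability at most `2 ^ (- c n)`, for
some `c > 0` and all large enough `n`. -/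
theorem stmt18 (p : ℝ) (hp : p ∈ Set.Ioc (4 / 5 : ℝ) 1)
    (ζ : ℝ) (hζ : ζ ∈ Set.Ioo (0 : ℝ) 1) :
    ∃ c : ℝ, 0 < c ∧ ∃ N : ℕ, ∀ n : ℕ, N ≤ n →
      ∀ (Ω : Type) [MeasurableSpace Ω] (P : Measure Ω), IsProbabilityMeasure P →
        ∀ X : ℕ → Ω → ℤ, IsBiasedWalk p (⌈(1 - ζ) * (n : ℝ)⌉ : ℤ) (n : ℤ) P X →
          P {ω | ∃ i : ℕ, (i : ℝ) ≤ 2 ^ (c * n) ∧ (n : ℤ) ≤ X i ω} ≤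
            ENNReal.ofReal (2 ^ (-(c * n))) := by
  obtain ⟨hp45, hp1⟩ := hp
  obtain ⟨hζ0, hζ1⟩ := hζ
  have hp0 : (0:ℝ) ≤ p := by linarith
  obtain ⟨lam, hlam1, hunit⟩ := BiasedWalkAux.unit_exists hp45 hp1
  have hlam0 : (0:ℝ) < lam := lt_trans one_pos hlam1
  have hL : 0 < Real.log lam := Real.log_pos hlam1
  have hL2 : 0 < Real.log 2 := Real.log_pos (by norm_num)
  have hmaster := BiasedWalkAux.master_of_unit hlam0 hunit
  set c : ℝ := ζ * Real.log lam / (4 * Real.log 2) with hc_def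
  have hc : 0 < c := by positivity
  refine ⟨c, hc, ?_⟩
  obtain ⟨N, hN⟩ := exists_nat_ge ((2 * (Real.log 3 + 5 * Real.log lam)) / (ζ * Real.log lam))
  refine ⟨N, ?_⟩
  intro n hn Ω _ P hP X walk
  haveI := hP
  set k : ℤ := ⌈(1 - ζ) * (n : ℝ)⌉ with hk_def
  set T : ℕ := ⌈(2:ℝ) ^ (c * n)⌉₊ with hT_def
  have hhit : {ω | ∃ i : ℕ, (i : ℝ) ≤ 2 ^ (c * n) ∧ (n:ℤ) ≤ X i ω} ⊆
      {ω | ∃ i : ℕ, i ≤ T ∧ (n:ℤ) ≤ X i ω} := by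
    rintro ω ⟨i, hi1, hi2⟩
    refine ⟨i, ?_, hi2⟩
    exact_mod_cast hi1.trans (Nat.le_ceil _)
  refine le_trans (measure_mono hhit) ?_
  refine le_trans (BiasedWalkAux.main_prob walk hp0 hp1 hlam1 hmaster T) ?_
  -- numeric part
  rw [show ((T + 1 : ℕ) : ℝ≥0∞) = ENNReal.ofReal ((T + 1 : ℕ) : ℝ) from
    (ENNReal.ofReal_natCast _).symm, ← ENNReal.ofReal_mul (by positivity)]
  apply ENNReal.ofReal_le_ofReal
  -- real inequality
  have hcn0 : (0:ℝ) ≤ c * n := by positivity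
  have h2cn_pos : (0:ℝ) < 2 ^ (c * n) := Real.rpow_pos_of_pos two_pos _
  have h2cn1 : (1:ℝ) ≤ 2 ^ (c * n) := by
    have := Real.rpow_le_rpow_of_exponent_le (by norm_num : (1:ℝ) ≤ 2) hcn0
    rwa [Real.rpow_zero] at this
  have hT1 : ((T + 1 : ℕ) : ℝ) ≤ 3 * 2 ^ (c * n) := by
    have h := Nat.ceil_lt_add_one (le_of_lt h2cn_pos)
    rw [← hT_def] at h
    push_cast
    linarith
  have hlamz : (0:ℝ) < lam ^ (k + 4 - (n:ℤ)) := zpow_pos hlam0 _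
  have hmain : 3 * 2 ^ (c * n) * lam ^ (k + 4 - (n:ℤ)) ≤ 2 ^ (-(c * n)) := by
    have hlhs_pos : (0:ℝ) < 3 * 2 ^ (c * n) * lam ^ (k + 4 - (n:ℤ)) := by positivity
    have hrhs_pos : (0:ℝ) < 2 ^ (-(c * n)) := Real.rpow_pos_of_pos two_pos _
    rw [← Real.log_le_log_iff hlhs_pos hrhs_pos]
    rw [Real.log_mul (by positivity) (ne_of_gt hlamz), Real.log_mul (by norm_num)
      (ne_of_gt h2cn_pos), Real.log_rpow two_pos, Real.log_rpow two_pos, Real.log_zpow]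
    -- log 3 + c n log 2 + (k+4-n) log lam ≤ -(c n) log 2
    have hcL : c * Real.log 2 = ζ * Real.log lam / 4 := by
      rw [hc_def]
      field_simp
    have hk_le : (k:ℝ) ≤ (1-ζ)*n + 1 := by
      rw [hk_def]
      exact le_of_lt (Int.ceil_lt_add_one _)
    have hcast : ((k + 4 - (n:ℤ) : ℤ) : ℝ) = (k:ℝ) + 4 - (n:ℝ) := by push_cast; ring
    rw [hcast]
    have hn_ge : (2 * (Real.log 3 + 5 * Real.log lam)) / (ζ * Real.log lam) ≤ (n:ℝ) :=
      le_trans hN (Nat.cast_le.mpr hn)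
    have hn_ge2 : 2 * (Real.log 3 + 5 * Real.log lam) ≤ (n:ℝ) * (ζ * Real.log lam) := by
      rwa [div_le_iff₀ (by positivity)] at hn_ge
    have e1 : ((k:ℝ) + 4 - n) * Real.log lam ≤ (5 - ζ*n) * Real.log lam := by
      apply mul_le_mul_of_nonneg_right _ hL.le
      nlinarith [hk_le]
    have e2 : c * n * Real.log 2 = ζ * Real.log lam * n / 4 := by
      calc c * n * Real.log 2 = (c * Real.log 2) * n := by ring
        _ = ζ * Real.log lam * n / 4 := by rw [hcL]; ring
    nlinarith [e1, e2, hn_ge2, hL.le]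
  calc ((T + 1 : ℕ) : ℝ) * lam ^ (k + 4 - (n:ℤ))
      ≤ (3 * 2 ^ (c * n)) * lam ^ (k + 4 - (n:ℤ)) :=
        mul_le_mul_of_nonneg_right hT1 hlamz.le
    _ ≤ 2 ^ (-(c * n)) := hmain
end

section
/- There is a universal constant C such that the following holds for every n. Let a matching market of size n (all pairs mutually acceptable) have a nested structure of fragments, i.e., the firms and workers can be indexed f_1, …, f_n and w_1, …, w_n so that for every i, worker w_i is firm f_i's most preferred worker among {w_i, w_{i+1}, …, w_n} and firm f_i is worker w_i's most preferred firm among {f_i, f_{i+1}, …, f_n}. Then the market has a unique stable matching μ* given by μ*(f_i) = w_i for all i, and under the uniform blocking-pair dynamics started at any matching λ_0, the expected number of steps until the process first reaches μ* is at most C·n³. -/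
variable {n : ℕ}

open MeasureTheory

instance : MeasurableSpace (Matching n) := ⊤

/-- `X` is the uniform blocking-pair dynamics started at `lam0`: whenever the
current matching is unstable, one of its blocking pairs is chosen uniformly at
random and satisfied; stable matchings are absorbing. -/
structure IsUniformDynamics (M : Market n) {Ω : Type*} [MeasurableSpace Ω]
    (P : Measure Ω) (X : ℕ → Ω → Matching n) (lam0 : Matching n) : Prop where
  measurable : ∀ t, Measurable (X t)
  init : ∀ᵐ ω ∂P, X 0 ω = lam0
  stable_fix : ∀ᵐ ω ∂P, ∀ t, Stable M (X t ω) → X (t + 1) ω = X t ω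
  unstable_step : ∀ᵐ ω ∂P, ∀ t, ¬ Stable M (X t ω) →
    ∃ f w, Satisfies M (X t ω) (X (t + 1) ω) f w
  uniform : ∀ (t : ℕ) (h : ℕ → Matching n), ¬ Stable M (h t) →
    ∀ f w, Blocking M (h t) f w →
      (Nat.card {p : Fin n × Fin n // Blocking M (h t) p.1 p.2} : ENNReal) *
          P {ω | (∀ s ≤ t, X s ω = h s) ∧ Satisfies M (h t) (X (t + 1) ω) f w} =
        P {ω | ∀ s ≤ t, X s ω = h s}

section Aux

open Classical in
/-- The `k`-prefix property: the first `k` designated pairs are matched. -/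
def Pfx (σ τ : Equiv.Perm (Fin n)) (μ : Matching n) (k : ℕ) : Prop :=
  ∀ j : Fin n, (j : ℕ) < k → μ.mf (σ j) = some (τ j)

open Classical in
/-- The potential: length of the maximal matched prefix of designated pairs. -/
noncomputable def phi (σ τ : Equiv.Perm (Fin n)) (μ : Matching n) : ℕ :=
  Nat.findGreatest (Pfx σ τ μ) n

variable {M : Market n} {σ τ : Equiv.Perm (Fin n)}

lemma Matching.ext' {μ ν : Matching n} (h1 : μ.mf = ν.mf) (h2 : μ.mw = ν.mw) : μ = ν := by
  cases μ; cases ν; simp_all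

lemma pfx_phi (μ : Matching n) : Pfx σ τ μ (phi σ τ μ) := by
  classical
  exact Nat.findGreatest_spec (Nat.zero_le n) (fun j hj => absurd hj (Nat.not_lt_zero _))

lemma phi_le (μ : Matching n) : phi σ τ μ ≤ n := by
  classical exact Nat.findGreatest_le n

lemma not_mf_at_phi {μ : Matching n} (h : phi σ τ μ < n) :
    μ.mf (σ ⟨phi σ τ μ, h⟩) ≠ some (τ ⟨phi σ τ μ, h⟩) := by
  classical
  intro hc
  have hng : ¬ Pfx σ τ μ (phi σ τ μ + 1) :=
    Nat.findGreatest_is_greatest (Nat.lt_succ_self _) h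
  apply hng
  intro j hj
  rcases Nat.lt_succ_iff_lt_or_eq.mp hj with hj' | hj'
  · exact pfx_phi μ j hj'
  · have : j = ⟨phi σ τ μ, h⟩ := Fin.ext hj'
    rw [this]; exact hc

variable (hf : ∀ i j : Fin n, i < j → M.fpref (σ i) (τ i) < M.fpref (σ i) (τ j))
  (hw : ∀ i j : Fin n, i < j → M.wpref (τ i) (σ i) < M.wpref (τ i) (σ j))

include hf hw in
/-- No blocking pair involves an agent in the matched prefix. -/
lemma block_ne_prefix {μ : Matching n} {f w : Fin n} (hb : Blocking M μ f w)
    {k : ℕ} (hk : Pfx σ τ μ k) {j : Fin n} (hj : (j : ℕ) < k) : f ≠ σ j ∧ w ≠ τ j := by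
  obtain ⟨hne, hfp, hwp⟩ := hb
  constructor
  · rintro rfl
    have hmf : μ.mf (σ j) = some (τ j) := hk j hj
    have h1 : M.fpref (σ j) w < M.fpref (σ j) (τ j) := hfp _ hmf
    have hw' : w = τ (τ.symm w) := (τ.apply_symm_apply w).symm
    rcases lt_trichotomy (τ.symm w) j with h | h | h
    · have hlk : ((τ.symm w : Fin n) : ℕ) < k := lt_trans h hj
      have hmw : μ.mw (τ (τ.symm w)) = some (σ (τ.symm w)) :=
        (μ.consistent _ _).1 (hk _ hlk)
      rw [← hw'] at hmw
      have h2 : M.wpref w (σ j) < M.wpref w (σ (τ.symm w)) := hwp _ hmw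
      have h3 := hw (τ.symm w) j h
      rw [← hw'] at h3
      omega
    · apply hne; rw [hmf, hw', h]
    · have h3 := hf j (τ.symm w) h
      rw [← hw'] at h3
      omega
  · rintro rfl
    have hmw : μ.mw (τ j) = some (σ j) := (μ.consistent _ _).1 (hk j hj)
    have h1 : M.wpref (τ j) f < M.wpref (τ j) (σ j) := hwp _ hmw
    have hf' : f = σ (σ.symm f) := (σ.apply_symm_apply f).symm
    rcases lt_trichotomy (σ.symm f) j with h | h | h
    · have hlk : ((σ.symm f : Fin n) : ℕ) < k := lt_trans h hj
      have hmf := hk (σ.symm f) hlk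
      rw [← hf'] at hmf
      have h2 : M.fpref f (τ j) < M.fpref f (τ (σ.symm f)) := hfp _ hmf
      have h3 := hf (σ.symm f) j h
      rw [← hf'] at h3
      omega
    · apply hne
      rw [hf', h]
      exact (μ.consistent _ _).2 hmw
    · have h3 := hw j (σ.symm f) h
      rw [← hf'] at h3
      omega

include hf hw in
lemma step_pfx {μ μ' : Matching n} {f w : Fin n} (hs : Satisfies M μ μ' f w)
    {k : ℕ} (hk : Pfx σ τ μ k) : Pfx σ τ μ' k := by
  intro j hj
  obtain ⟨hb, h2, h3, h4, h5, h6⟩ := hs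
  obtain ⟨hfne, hwne⟩ := block_ne_prefix hf hw hb hk hj
  have hmw : μ.mw w ≠ some (σ j) := by
    intro hc
    apply hwne
    have h7 := (μ.consistent _ _).2 hc
    rw [hk j hj] at h7
    exact (Option.some_injective _ h7).symm
  rw [h5 (σ j) (Ne.symm hfne) hmw]
  exact hk j hj

include hf hw in
lemma phi_mono {μ μ' : Matching n} {f w : Fin n} (hs : Satisfies M μ μ' f w) :
    phi σ τ μ ≤ phi σ τ μ' := by
  classical
  exact Nat.le_findGreatest (phi_le μ) (step_pfx hf hw hs (pfx_phi μ))

include hf hw in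
/-- If the `k`-prefix is matched but pair `k` is not, then pair `k` is blocking. -/
lemma block_of_pfx {μ : Matching n} {k : ℕ} (hkn : k < n) (hk : Pfx σ τ μ k)
    (hne : μ.mf (σ ⟨k, hkn⟩) ≠ some (τ ⟨k, hkn⟩)) :
    Blocking M μ (σ ⟨k, hkn⟩) (τ ⟨k, hkn⟩) := by
  refine ⟨hne, ?_, ?_⟩
  · intro w' hw'
    have hww : w' = τ (τ.symm w') := (τ.apply_symm_apply w').symm
    rcases lt_trichotomy (τ.symm w') (⟨k, hkn⟩ : Fin n) with h | h | h
    · exfalso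
      have hmw : μ.mw (τ (τ.symm w')) = some (σ (τ.symm w')) := (μ.consistent _ _).1 (hk _ h)
      rw [← hww] at hmw
      have : μ.mw w' = some (σ ⟨k, hkn⟩) := (μ.consistent _ _).1 hw'
      rw [this] at hmw
      have := σ.injective (Option.some_injective _ hmw)
      exact absurd (this ▸ h) (lt_irrefl _)
    · exact absurd (hw'.trans (by rw [hww, h])) hne
    · have := hf ⟨k, hkn⟩ (τ.symm w') h
      rwa [← hww] at this
  · intro f' hf'
    have hff : f' = σ (σ.symm f') := (σ.apply_symm_apply f').symm
    rcases lt_trichotomy (σ.symm f') (⟨k, hkn⟩ : Fin n) with h | h | h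
    · exfalso
      have hmf : μ.mf (σ (σ.symm f')) = some (τ (σ.symm f')) := hk _ h
      rw [← hff] at hmf
      have : μ.mf f' = some (τ ⟨k, hkn⟩) := (μ.consistent _ _).2 hf'
      rw [this] at hmf
      have := τ.injective (Option.some_injective _ hmf.symm)
      exact absurd (this ▸ h) (lt_irrefl _)
    · exfalso
      have hfe : f' = σ ⟨k, hkn⟩ := by rw [hff, h]
      rw [hfe] at hf'
      exact hne ((μ.consistent _ _).2 hf')
    · have := hw ⟨k, hkn⟩ (σ.symm f') h
      rwa [← hff] at this

include hf hw in
lemma phi_succ {μ μ' : Matching n} (h : phi σ τ μ < n)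
    (hs : Satisfies M μ μ' (σ ⟨phi σ τ μ, h⟩) (τ ⟨phi σ τ μ, h⟩)) :
    phi σ τ μ + 1 ≤ phi σ τ μ' := by
  classical
  apply Nat.le_findGreatest h
  intro j hj
  rcases Nat.lt_succ_iff_lt_or_eq.mp hj with hj' | hj'
  · exact step_pfx hf hw hs (pfx_phi μ) j hj'
  · have hje : j = ⟨phi σ τ μ, h⟩ := Fin.ext hj'
    rw [hje]
    exact hs.2.1

include hf hw in
lemma unstable_blocking_at_phi {μ : Matching n} (h : phi σ τ μ < n) :
    Blocking M μ (σ ⟨phi σ τ μ, h⟩) (τ ⟨phi σ τ μ, h⟩) :=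
  block_of_pfx hf hw h (pfx_phi μ) (not_mf_at_phi h)

variable {μstar : Matching n} (hμ : ∀ i : Fin n, μstar.mf (σ i) = some (τ i))

include hμ in
lemma eq_mustar_of_all {μ : Matching n} (h : ∀ i : Fin n, μ.mf (σ i) = some (τ i)) :
    μ = μstar := by
  apply Matching.ext'
  · funext f
    have hf' : f = σ (σ.symm f) := (σ.apply_symm_apply f).symm
    rw [hf', h (σ.symm f), hμ (σ.symm f)]
  · funext w
    have hw' : w = τ (τ.symm w) := (τ.apply_symm_apply w).symm
    rw [hw', (μ.consistent _ _).1 (h (τ.symm w)), ((μstar.consistent _ _).1 (hμ (τ.symm w))).symm]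

include hf hw hμ in
lemma stable_mustar : Stable M μstar := by
  intro f w hb
  exact (block_ne_prefix hf hw hb (fun j _ => hμ j) (σ.symm f).isLt).1
    (σ.apply_symm_apply f).symm

include hf hw in
lemma all_of_stable {μ : Matching n} (hst : Stable M μ) :
    ∀ i : Fin n, μ.mf (σ i) = some (τ i) := by
  have key : ∀ m : ℕ, Pfx σ τ μ m := by
    intro m
    induction m with
    | zero => exact fun j hj => absurd hj (Nat.not_lt_zero _)
    | succ m ih =>
      intro j hj
      rcases Nat.lt_succ_iff_lt_or_eq.mp hj with hj' | hj'
      · exact ih j hj'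
      · by_contra hc
        have hmn : m < n := hj' ▸ j.isLt
        have hje : j = ⟨m, hmn⟩ := Fin.ext hj'
        rw [hje] at hc
        exact hst _ _ (block_of_pfx hf hw hmn ih hc)
  exact fun i => key n i i.isLt

include hf hw hμ in
lemma unique_stable {μ : Matching n} (hst : Stable M μ) : μ = μstar :=
  eq_mustar_of_all hμ (all_of_stable hf hw hst)

set_option linter.unusedSectionVars false in
include hf hw hμ in
lemma phi_lt_of_ne {μ : Matching n} (hne : μ ≠ μstar) : phi σ τ μ < n := by
  rcases lt_or_eq_of_le (phi_le (σ := σ) (τ := τ) μ) with h | h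
  · exact h
  · exfalso
    apply hne
    apply eq_mustar_of_all hμ
    intro i
    exact pfx_phi μ i (by rw [h]; exact i.isLt)

include hf hw hμ in
lemma phi_eq_n {μ : Matching n} (h : ¬ phi σ τ μ < n) : μ = μstar := by
  by_contra hc
  exact h (phi_lt_of_ne hf hw hμ hc)

include hf hw hμ in
lemma unstable_of_ne {μ : Matching n} (hne : μ ≠ μstar) : ¬ Stable M μ :=
  fun h => hne (unique_stable hf hw hμ h)

end Aux
section Dyn

open MeasureTheory

instance : Finite (Matching n) := by
  apply Finite.of_injective (fun μ : Matching n => (μ.mf, μ.mw))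
  intro a b h
  exact Matching.ext' (congrArg Prod.fst h) (congrArg Prod.snd h)

/-- Extend a finite history to an infinite one. -/
def extOf (t : ℕ) (g : Fin (t + 1) → Matching n) : ℕ → Matching n :=
  fun s => if h : s < t + 1 then g ⟨s, h⟩ else g ⟨t, Nat.lt_succ_self t⟩

lemma extOf_eq (t : ℕ) (g : Fin (t + 1) → Matching n) {s : ℕ} (hs : s ≤ t) :
    extOf t g s = g ⟨s, Nat.lt_succ_of_le hs⟩ := dif_pos _

variable {Ω : Type} [MeasurableSpace Ω] (M : Market n) (σ τ : Equiv.Perm (Fin n))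
  (X : ℕ → Ω → Matching n) (μstar : Matching n)

/-- The event that the trajectory follows the finite history `g` up to time `t`. -/
def EV (t : ℕ) (g : Fin (t + 1) → Matching n) : Set Ω :=
  {ω | ∀ s ≤ t, X s ω = extOf t g s}

/-- The event that at time `t+1` the blocking pair at position `phi` of the
history's final state has just been satisfied. -/
def SatSet (t : ℕ) (g : Fin (t + 1) → Matching n) : Set Ω :=
  {ω | ∃ hlt : phi σ τ (extOf t g t) < n,
    Satisfies M (extOf t g t) (X (t + 1) ω)
      (σ ⟨phi σ τ (extOf t g t), hlt⟩) (τ ⟨phi σ τ (extOf t g t), hlt⟩)}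

/-- The progress event at time `t`. -/
def GSet (t : ℕ) : Set Ω :=
  ⋃ g : Fin (t + 1) → Matching n, EV X t g ∩ SatSet M σ τ X t g

/-- The event that the process has not hit `μstar` by time `t`. -/
def ASet (t : ℕ) : Set Ω := {ω | ∀ s ≤ t, X s ω ≠ μstar}

variable {M σ τ X}

lemma mEV (hX : ∀ t, Measurable (X t)) (t : ℕ) (g : Fin (t + 1) → Matching n) :
    MeasurableSet (EV X t g) := by
  have : EV X t g = ⋂ (s : ℕ), ⋂ (_ : s ≤ t), (X s) ⁻¹' {extOf t g s} := by
    ext ω; simp [EV]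
  rw [this]
  exact MeasurableSet.iInter fun s => MeasurableSet.iInter fun _ =>
    (hX s) MeasurableSpace.measurableSet_top

lemma mSat (hX : ∀ t, Measurable (X t)) (t : ℕ) (g : Fin (t + 1) → Matching n) :
    MeasurableSet (SatSet M σ τ X t g) := by
  have : SatSet M σ τ X t g = (X (t + 1)) ⁻¹'
      {m | ∃ hlt : phi σ τ (extOf t g t) < n,
        Satisfies M (extOf t g t) m
          (σ ⟨phi σ τ (extOf t g t), hlt⟩) (τ ⟨phi σ τ (extOf t g t), hlt⟩)} := rfl
  rw [this]
  exact (hX (t + 1)) MeasurableSpace.measurableSet_top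

lemma mG (hX : ∀ t, Measurable (X t)) (t : ℕ) :
    MeasurableSet (GSet M σ τ X t) := by
  haveI : Countable (Fin (t + 1) → Matching n) := Countable.of_equiv _ (Equiv.refl _)
  exact MeasurableSet.iUnion fun g => (mEV hX t g).inter (mSat hX t g)

lemma mA (hX : ∀ t, Measurable (X t)) (t : ℕ) :
    MeasurableSet (ASet X μstar t) := by
  have : ASet X μstar t = ⋂ (s : ℕ), ⋂ (_ : s ≤ t), (X s) ⁻¹' {μstar}ᶜ := by
    ext ω; simp [ASet]
  rw [this]
  exact MeasurableSet.iInter fun s => MeasurableSet.iInter fun _ =>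
    (hX s) MeasurableSpace.measurableSet_top

variable (hf : ∀ i j : Fin n, i < j → M.fpref (σ i) (τ i) < M.fpref (σ i) (τ j))
  (hw : ∀ i j : Fin n, i < j → M.wpref (τ i) (σ i) < M.wpref (τ i) (σ j))
  (hμ : ∀ i : Fin n, μstar.mf (σ i) = some (τ i))
  {P : Measure Ω} {lam0 : Matching n}

include hf hw hμ in
/-- Per-step bound: the probability of not having hit `μstar` is at most `n²`
times the probability of making progress. -/
lemma A_le_G (hD : IsUniformDynamics M P X lam0) (t : ℕ) :
    P (ASet X μstar t) ≤ (n : ENNReal) ^ 2 * P (GSet M σ τ X t) := by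
  classical
  haveI : Fintype (Fin (t + 1) → Matching n) := Fintype.ofFinite _
  set Bad : Finset (Fin (t + 1) → Matching n) :=
    Finset.univ.filter (fun g => ∀ s : Fin (t + 1), g s ≠ μstar) with hBad
  have hsub : ASet X μstar t ⊆ ⋃ g ∈ Bad, EV X t g := by
    intro ω hω
    have hgB : (fun s : Fin (t + 1) => X (s : ℕ) ω) ∈ Bad := by
      rw [hBad, Finset.mem_filter]
      exact ⟨Finset.mem_univ _, fun s => hω (s : ℕ) (Nat.lt_succ_iff.mp s.isLt)⟩
    have hgE : ω ∈ EV X t (fun s : Fin (t + 1) => X (s : ℕ) ω) := by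
      intro s hs
      rw [extOf_eq t _ hs]
    exact Set.mem_biUnion hgB hgE
  have h1 : P (ASet X μstar t) ≤ ∑ g ∈ Bad, P (EV X t g) :=
    le_trans (measure_mono hsub) (measure_biUnion_finset_le _ _)
  have h2 : ∀ g ∈ Bad, P (EV X t g) ≤
      (n : ENNReal) ^ 2 * P (EV X t g ∩ SatSet M σ τ X t g) := by
    intro g hg
    have hgbad : ∀ s : Fin (t + 1), g s ≠ μstar := (Finset.mem_filter.mp hg).2
    have hne : extOf t g t ≠ μstar := by
      rw [extOf_eq t g le_rfl]; exact hgbad _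
    have hlt : phi σ τ (extOf t g t) < n := phi_lt_of_ne hf hw hμ hne
    have hblock := unstable_blocking_at_phi hf hw (μ := extOf t g t) hlt
    have huns : ¬ Stable M (extOf t g t) := unstable_of_ne hf hw hμ hne
    have hU := hD.uniform t (extOf t g) huns _ _ hblock
    have hN : (Nat.card {p : Fin n × Fin n // Blocking M (extOf t g t) p.1 p.2} : ENNReal) ≤
        (n : ENNReal) ^ 2 := by
      have hle : Nat.card {p : Fin n × Fin n // Blocking M (extOf t g t) p.1 p.2} ≤
          Nat.card (Fin n × Fin n) :=
        Nat.card_le_card_of_injective _ Subtype.val_injective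
      have hcard : Nat.card (Fin n × Fin n) = n ^ 2 := by
        simp [Nat.card_eq_fintype_card, sq]
      rw [hcard] at hle
      exact_mod_cast hle
    have hss : {ω | (∀ s ≤ t, X s ω = extOf t g s) ∧
        Satisfies M (extOf t g t) (X (t + 1) ω)
          (σ ⟨phi σ τ (extOf t g t), hlt⟩) (τ ⟨phi σ τ (extOf t g t), hlt⟩)} ⊆
        EV X t g ∩ SatSet M σ τ X t g := by
      rintro ω ⟨hω1, hω2⟩
      exact ⟨hω1, hlt, hω2⟩
    calc P (EV X t g) = _ * P _ := hU.symm
      _ ≤ (n : ENNReal) ^ 2 * P (EV X t g ∩ SatSet M σ τ X t g) :=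
        mul_le_mul' hN (measure_mono hss)
  have hdisj : (Bad : Set (Fin (t + 1) → Matching n)).PairwiseDisjoint
      (fun g => EV X t g ∩ SatSet M σ τ X t g) := by
    intro g _ g' _ hgg
    refine Set.disjoint_left.mpr fun ω hω hω' => hgg ?_
    funext i
    have e1 := hω.1 (i : ℕ) (Nat.lt_succ_iff.mp i.isLt)
    have e2 := hω'.1 (i : ℕ) (Nat.lt_succ_iff.mp i.isLt)
    rw [extOf_eq t g (Nat.lt_succ_iff.mp i.isLt)] at e1
    rw [extOf_eq t g' (Nat.lt_succ_iff.mp i.isLt)] at e2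
    rw [← Fin.eta i i.isLt]
    rw [← e1, ← e2]
  have h3 : ∑ g ∈ Bad, P (EV X t g ∩ SatSet M σ τ X t g) =
      P (⋃ g ∈ Bad, EV X t g ∩ SatSet M σ τ X t g) :=
    (measure_biUnion_finset hdisj fun g _ => (mEV hD.measurable t g).inter
      (mSat hD.measurable t g)).symm
  have h4 : P (⋃ g ∈ Bad, EV X t g ∩ SatSet M σ τ X t g) ≤ P (GSet M σ τ X t) :=
    measure_mono (Set.iUnion₂_subset fun g _ => Set.subset_iUnion
      (fun g => EV X t g ∩ SatSet M σ τ X t g) g)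
  calc P (ASet X μstar t) ≤ ∑ g ∈ Bad, P (EV X t g) := h1
    _ ≤ ∑ g ∈ Bad, (n : ENNReal) ^ 2 * P (EV X t g ∩ SatSet M σ τ X t g) :=
      Finset.sum_le_sum h2
    _ = (n : ENNReal) ^ 2 * ∑ g ∈ Bad, P (EV X t g ∩ SatSet M σ τ X t g) := by
      rw [Finset.mul_sum]
    _ ≤ (n : ENNReal) ^ 2 * P (GSet M σ τ X t) := by
      rw [h3]; exact mul_le_mul_right h4 _

include hf hw in
/-- Per-step potential increase. -/
lemma lint_step (hD : IsUniformDynamics M P X lam0) (t : ℕ) :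
    ∫⁻ ω, (phi σ τ (X t ω) : ENNReal) ∂P + P (GSet M σ τ X t) ≤
      ∫⁻ ω, (phi σ τ (X (t + 1) ω) : ENNReal) ∂P := by
  have hmeas : Measurable fun ω => (phi σ τ (X t ω) : ENNReal) :=
    (measurable_from_top (f := fun m : Matching n => (phi σ τ m : ENNReal))).comp
      (hD.measurable t)
  have hmG := mG (M := M) (σ := σ) (τ := τ) hD.measurable t
  have hae : ∀ᵐ ω ∂P, (phi σ τ (X t ω) : ENNReal) +
      (GSet M σ τ X t).indicator (fun _ => (1 : ENNReal)) ω ≤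
      (phi σ τ (X (t + 1) ω) : ENNReal) := by
    filter_upwards [hD.stable_fix, hD.unstable_step] with ω hstab huns
    by_cases hGm : ω ∈ GSet M σ τ X t
    · rw [Set.indicator_of_mem hGm]
      obtain ⟨g, hgEV, hlt, hsat⟩ := Set.mem_iUnion.mp hGm
      have hXt : X t ω = extOf t g t := hgEV t le_rfl
      have hstep := phi_succ hf hw hlt hsat
      rw [hXt]
      exact_mod_cast hstep
    · rw [Set.indicator_of_notMem hGm, add_zero]
      by_cases hs : Stable M (X t ω)
      · rw [hstab t hs]
      · obtain ⟨f, w, hsat⟩ := huns t hs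
        exact_mod_cast phi_mono hf hw hsat
  calc ∫⁻ ω, (phi σ τ (X t ω) : ENNReal) ∂P + P (GSet M σ τ X t)
      = ∫⁻ ω, ((phi σ τ (X t ω) : ENNReal) +
          (GSet M σ τ X t).indicator (fun _ => (1 : ENNReal)) ω) ∂P := by
        rw [lintegral_add_left hmeas, lintegral_indicator hmG, setLIntegral_one]
    _ ≤ ∫⁻ ω, (phi σ τ (X (t + 1) ω) : ENNReal) ∂P := lintegral_mono_ae hae

end Dyn
/-- **Polynomial stabilization under a nested structure of fragments**: there is a
universal constant `C` such that for every market of size `n` whose firms and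
workers can be indexed (via permutations `σ`, `τ`) so that `(σ i, τ i)` is a
top-top match of the submarket of agents with indices `≥ i`, the matching `μstar`
pairing `σ i` with `τ i` is the unique stable matching, and the uniform
blocking-pair dynamics started at any matching reaches `μstar` after at most
`C n ^ 3` steps in expectation. -/
theorem stmt19 :
    ∃ C : ℕ, ∀ (n : ℕ) (M : Market n) (σ τ : Equiv.Perm (Fin n)),
      (∀ i j : Fin n, i < j → M.fpref (σ i) (τ i) < M.fpref (σ i) (τ j)) →
      (∀ i j : Fin n, i < j → M.wpref (τ i) (σ i) < M.wpref (τ i) (σ j)) →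
      ∀ μstar : Matching n, (∀ i : Fin n, μstar.mf (σ i) = some (τ i)) →
        (Stable M μstar ∧ ∀ μ : Matching n, Stable M μ → μ = μstar) ∧
        ∀ (Ω : Type) [MeasurableSpace Ω] (P : Measure Ω), IsProbabilityMeasure P →
          ∀ (X : ℕ → Ω → Matching n) (lam0 : Matching n),
            IsUniformDynamics M P X lam0 →
            ∫⁻ ω, (⨅ (t : ℕ) (_ : X t ω = μstar), (t : ENNReal)) ∂P ≤
              (C : ENNReal) * n ^ 3 := by
  classical
  refine ⟨1, ?_⟩
  intro n M σ τ hf hw μstar hμ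
  refine ⟨⟨stable_mustar hf hw hμ, fun μ h => unique_stable hf hw hμ h⟩, ?_⟩
  intro Ω _ P hP X lam0 hD
  -- pointwise bound of the hitting time by a sum of indicators
  have hpt : ∀ ω, (⨅ (t : ℕ) (_ : X t ω = μstar), (t : ENNReal)) ≤
      ∑' t, (ASet X μstar t).indicator (fun _ => (1 : ENNReal)) ω := by
    intro ω
    by_cases hex : ∃ t, X t ω = μstar
    · refine le_trans (iInf₂_le (Nat.find hex) (Nat.find_spec hex)) ?_
      have hsum : ((Nat.find hex : ℕ) : ENNReal) =
          ∑ t ∈ Finset.range (Nat.find hex),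
            (ASet X μstar t).indicator (fun _ => (1 : ENNReal)) ω := by
        rw [Finset.sum_congr rfl (fun t ht => ?_), Finset.sum_const, nsmul_eq_mul,
          Finset.card_range, mul_one]
        have hmem : ω ∈ ASet X μstar t := by
          intro s hs
          exact Nat.find_min hex (lt_of_le_of_lt hs (Finset.mem_range.mp ht))
        rw [Set.indicator_of_mem hmem]
      rw [hsum]
      exact ENNReal.sum_le_tsum _
    · have hall : ∀ t, (ASet X μstar t).indicator (fun _ => (1 : ENNReal)) ω = 1 := by
        intro t
        have hmem : ω ∈ ASet X μstar t := fun s _ hc => hex ⟨s, hc⟩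
        rw [Set.indicator_of_mem hmem]
      calc (⨅ (t : ℕ) (_ : X t ω = μstar), (t : ENNReal)) ≤ ⊤ := le_top
        _ = ∑' _ : ℕ, (1 : ENNReal) :=
            (ENNReal.tsum_const_eq_top_of_ne_zero one_ne_zero).symm
        _ = _ := by rw [tsum_congr (fun t => (hall t).symm)]
  -- expected potential bound
  have hYle : ∀ T : ℕ, ∫⁻ ω, (phi σ τ (X T ω) : ENNReal) ∂P ≤ (n : ENNReal) := by
    intro T
    calc ∫⁻ ω, (phi σ τ (X T ω) : ENNReal) ∂P ≤ ∫⁻ _, (n : ENNReal) ∂P :=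
        lintegral_mono fun ω => Nat.cast_le.mpr (phi_le (σ := σ) (τ := τ) (X T ω))
      _ = (n : ENNReal) := by simp [lintegral_const, measure_univ]
  have hGsum : ∀ T : ℕ, ∑ t ∈ Finset.range T, P (GSet M σ τ X t) ≤ (n : ENNReal) := by
    intro T
    have key : ∀ T : ℕ, ∑ t ∈ Finset.range T, P (GSet M σ τ X t) ≤
        ∫⁻ ω, (phi σ τ (X T ω) : ENNReal) ∂P := by
      intro T
      induction T with
      | zero => simp
      | succ T ih =>
        rw [Finset.sum_range_succ]
        exact le_trans (add_le_add_left ih _) (lint_step hf hw hD T)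
    exact le_trans (key T) (hYle T)
  -- sum of the failure probabilities
  have hAsum : ∑' t, P (ASet X μstar t) ≤ (n : ENNReal) ^ 3 := by
    rw [ENNReal.tsum_eq_iSup_nat]
    refine iSup_le fun T => ?_
    calc ∑ t ∈ Finset.range T, P (ASet X μstar t)
        ≤ ∑ t ∈ Finset.range T, (n : ENNReal) ^ 2 * P (GSet M σ τ X t) :=
          Finset.sum_le_sum fun t _ => A_le_G μstar hf hw hμ hD t
      _ = (n : ENNReal) ^ 2 * ∑ t ∈ Finset.range T, P (GSet M σ τ X t) := by
          rw [Finset.mul_sum]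
      _ ≤ (n : ENNReal) ^ 2 * (n : ENNReal) := mul_le_mul_right (hGsum T) _
      _ = (n : ENNReal) ^ 3 := by ring
  calc ∫⁻ ω, (⨅ (t : ℕ) (_ : X t ω = μstar), (t : ENNReal)) ∂P
      ≤ ∫⁻ ω, ∑' t, (ASet X μstar t).indicator (fun _ => (1 : ENNReal)) ω ∂P :=
        lintegral_mono hpt
    _ = ∑' t, ∫⁻ ω, (ASet X μstar t).indicator (fun _ => (1 : ENNReal)) ω ∂P :=
        lintegral_tsum fun t =>
          (measurable_const.indicator (mA μstar hD.measurable t)).aemeasurable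
    _ = ∑' t, P (ASet X μstar t) := by
        refine tsum_congr fun t => ?_
        rw [lintegral_indicator (mA μstar hD.measurable t), setLIntegral_one]
    _ ≤ (n : ENNReal) ^ 3 := hAsum
    _ = ((1 : ℕ) : ENNReal) * (n : ENNReal) ^ 3 := by rw [Nat.cast_one, one_mul]
end
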